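/- arXiv:1608.01305 — 5 statements merged into one kernel-verified Lean document; each statement's English description precedes it below -/
import Mathlib

section
/- For the elephant random walk with p ∈ (0,1), for all n ≥ 1 one has E[S_n] = (2q−1)·Γ(n+2p−1)/(Γ(2p)·Γ(n)). -/
/-!
Conditioning on the past, the `n+1`-st step is `+1` with probability
`(1 + (2p - 1) S_n / n) / 2`, so taking expectations gives
`E[S_{n+1}] = (n + 2p - 1) / n * E[S_n]` with `E[S_1] = 2q - 1`.
The Gamma ratio `Γ(n + 2p - 1) / (Γ(2p) Γ(n))` solves this recurrence by `Γ(x + 1) = x Γ(x)`.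
-/

open MeasureTheory

theorem eq_mul_Gamma_div_of_recurrence {b c : ℝ} (hb : 0 < b) {m : ℕ → ℝ} (h1 : m 1 = c)
    (hsucc : ∀ n ≥ 1, m (n + 1) = (n + b - 1) / n * m n) :
    ∀ n ≥ 1, m n = c * Real.Gamma (n + b - 1) / (Real.Gamma b * Real.Gamma n) := by
  have hΓb : Real.Gamma b ≠ 0 := (Real.Gamma_pos_of_pos hb).ne'
  intro n hn
  induction n, hn using Nat.le_induction with
  | base => simp [h1, hΓb]
  | succ n hn ih =>
    have hn1 : (1 : ℝ) ≤ n := by exact_mod_cast hn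
    have hn0 : (0 : ℝ) < n := by linarith
    have hΓn : Real.Gamma n ≠ 0 := (Real.Gamma_pos_of_pos hn0).ne'
    have hΓshift : Real.Gamma ((n + 1 : ℕ) + b - 1) = (n + b - 1) * Real.Gamma (n + b - 1) := by
      rw [← Real.Gamma_add_one (by linarith)]
      push_cast
      ring_nf
    rw [hsucc n hn, ih, hΓshift, Nat.cast_succ, Real.Gamma_add_one hn0.ne']
    field_simp

section PlusMinusOne

variable {Ω : Type*} {m0 : MeasurableSpace Ω} {μ : Measure Ω} {X : Ω → ℝ}

theorem ite_eq_one_eq_one_add_div_two {x : ℝ} (hx : x = 1 ∨ x = -1) :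
    (if x = 1 then (1 : ℝ) else 0) = (1 + x) / 2 := by
  rcases hx with rfl | rfl <;> norm_num

theorem mul_ite_add_mul_ite_eq (p : ℝ) {x : ℝ} (hx : x = 1 ∨ x = -1) :
    p * (if x = 1 then (1 : ℝ) else 0) + (1 - p) * (if x = -1 then (1 : ℝ) else 0)
      = (1 + (2 * p - 1) * x) / 2 := by
  rcases hx with rfl | rfl <;> norm_num
  ring

theorem integrable_of_ae_eq_one_or_neg_one [IsFiniteMeasure μ] (hXm : Measurable X)
    (hX : ∀ᵐ ω ∂μ, X ω = 1 ∨ X ω = -1) : Integrable X μ :=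
  Integrable.of_bound hXm.aestronglyMeasurable 1 <| by
    filter_upwards [hX] with ω hω
    rcases hω with h | h <;> simp [h]

theorem integral_eq_two_mul_integral_ite_sub_one [IsProbabilityMeasure μ] (hXm : Measurable X)
    (hX : ∀ᵐ ω ∂μ, X ω = 1 ∨ X ω = -1) :
    ∫ ω, X ω ∂μ = 2 * ∫ ω, (if X ω = 1 then (1 : ℝ) else 0) ∂μ - 1 := by
  have hite : ∫ ω, (if X ω = 1 then (1 : ℝ) else 0) ∂μ = ∫ ω, (1 + X ω) / 2 ∂μ :=
    integral_congr_ae <| by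
      filter_upwards [hX] with ω hω
      exact ite_eq_one_eq_one_add_div_two hω
  rw [hite, integral_div, integral_add (integrable_const 1)
    (integrable_of_ae_eq_one_or_neg_one hXm hX)]
  simp only [integral_const, probReal_univ, smul_eq_mul, mul_one]
  ring

end PlusMinusOne

theorem integral_sign_succ_eq {Ω : Type*} {m0 : MeasurableSpace Ω} {μ : Measure Ω}
    [IsProbabilityMeasure μ] {p : ℝ} {σ : ℕ → Ω → ℝ} (hσmeas : ∀ k, Measurable (σ k))
    (hval : ∀ k ≥ 1, ∀ᵐ ω ∂μ, σ k ω = 1 ∨ σ k ω = -1)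
    {m : MeasurableSpace Ω} (hm : m ≤ m0) {n : ℕ} (hn : n ≠ 0)
    (hcond : μ[(fun ω => if σ (n + 1) ω = 1 then (1 : ℝ) else 0) | m]
      =ᵐ[μ] fun ω => (n : ℝ)⁻¹ * ∑ k ∈ Finset.Icc 1 n,
        (p * (if σ k ω = 1 then (1 : ℝ) else 0) + (1 - p) * (if σ k ω = -1 then (1 : ℝ) else 0))) :
    ∫ ω, σ (n + 1) ω ∂μ = (2 * p - 1) / n * ∫ ω, ∑ k ∈ Finset.Icc 1 n, σ k ω ∂μ := by
  have hn' : (n : ℝ) ≠ 0 := Nat.cast_ne_zero.2 hn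
  have hS : Integrable (fun ω => ∑ k ∈ Finset.Icc 1 n, σ k ω) μ :=
    integrable_finsetSum _ fun k hk =>
      integrable_of_ae_eq_one_or_neg_one (hσmeas k) (hval k (Finset.mem_Icc.1 hk).1)
  have hcond_affine : μ[(fun ω => if σ (n + 1) ω = 1 then (1 : ℝ) else 0) | m]
      =ᵐ[μ] fun ω => 1 / 2 + (2 * p - 1) / (2 * n) * ∑ k ∈ Finset.Icc 1 n, σ k ω := by
    filter_upwards [hcond, (Finset.Icc 1 n).eventually_all.2
      fun k hk => hval k (Finset.mem_Icc.1 hk).1] with ω hω hpm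
    rw [hω, Finset.sum_congr rfl fun k hk => mul_ite_add_mul_ite_eq p (hpm k hk),
      ← Finset.sum_div, Finset.sum_add_distrib, ← Finset.mul_sum]
    simp only [Finset.sum_const, Nat.card_Icc, add_tsub_cancel_right, nsmul_eq_mul, mul_one]
    field_simp
  have hmean : ∫ ω, (if σ (n + 1) ω = 1 then (1 : ℝ) else 0) ∂μ
      = 1 / 2 + (2 * p - 1) / (2 * n) * ∫ ω, ∑ k ∈ Finset.Icc 1 n, σ k ω ∂μ := by
    rw [← integral_condExp hm, integral_congr_ae hcond_affine,
      integral_add (integrable_const _) (hS.const_mul _), integral_const_mul]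
    simp
  rw [integral_eq_two_mul_integral_ite_sub_one (hσmeas _) (hval _ (by omega)), hmean]
  field_simp
  ring

theorem erw_mean_formula_general
    {Ω : Type*} {m0 : MeasurableSpace Ω} (μ : Measure Ω) [IsProbabilityMeasure μ]
    (p q : ℝ) (hq : q ∈ Set.Icc (0:ℝ) 1)
    (σ : ℕ → Ω → ℝ) (hσmeas : ∀ k, Measurable (σ k))
    (hval : ∀ k ≥ 1, ∀ᵐ ω ∂μ, σ k ω = 1 ∨ σ k ω = -1)
    (hq1 : μ {ω | σ 1 ω = 1} = ENNReal.ofReal q)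
    (F : ℕ → MeasurableSpace Ω)
    (hF : ∀ n, F n = ⨆ k ∈ Set.Icc 1 n, MeasurableSpace.comap (σ k) inferInstance)
    (S : ℕ → Ω → ℝ) (hS : ∀ n ω, S n ω = ∑ k ∈ Finset.Icc 1 n, σ k ω)
    (hmodel : ∀ n ≥ 1, ∀ s : ℝ, (s = 1 ∨ s = -1) →
      μ[(fun ω => if σ (n+1) ω = s then (1:ℝ) else 0) | F n]
        =ᵐ[μ] fun ω => (n : ℝ)⁻¹ * ∑ k ∈ Finset.Icc 1 n,
          (p * (if σ k ω = s then (1:ℝ) else 0)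
            + (1 - p) * (if σ k ω = -s then (1:ℝ) else 0)))
    (hp' : p ∈ Set.Ioo (0:ℝ) 1) :
    ∀ n : ℕ, 1 ≤ n →
      ∫ ω, S n ω ∂μ =
        (2 * q - 1) * Real.Gamma ((n : ℝ) + 2 * p - 1)
          / (Real.Gamma (2 * p) * Real.Gamma (n : ℝ)) := by
  simp only [hS]
  have hF_le (n : ℕ) : F n ≤ m0 := hF n ▸ iSup₂_le fun k _ => (hσmeas k).comap_le
  have hint (k : ℕ) (hk : 1 ≤ k) : Integrable (σ k) μ :=
    integrable_of_ae_eq_one_or_neg_one (hσmeas k) (hval k hk)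
  refine eq_mul_Gamma_div_of_recurrence (m := fun n => ∫ ω, ∑ k ∈ Finset.Icc 1 n, σ k ω ∂μ)
    (by linarith [hp'.1]) ?_ fun n hn => ?_
  · have hprob : ∫ ω, (if σ 1 ω = 1 then (1 : ℝ) else 0) ∂μ = q := by
      -- the integrand is definitionally `{ω | σ 1 ω = 1}.indicator 1`
      refine (integral_indicator_one (s := {ω | σ 1 ω = 1})
        (hσmeas 1 (measurableSet_singleton 1))).trans ?_
      rw [Measure.real, hq1, ENNReal.toReal_ofReal hq.1]
    simp [integral_eq_two_mul_integral_ite_sub_one (hσmeas 1) (hval 1 le_rfl), hprob]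
  · have hn0 : (n : ℝ) ≠ 0 := by positivity
    simp_rw [Finset.sum_Icc_succ_top (by omega : 1 ≤ n + 1)]
    rw [integral_add (integrable_finsetSum _ fun k hk => hint k (Finset.mem_Icc.1 hk).1)
      (hint _ (by omega)), integral_sign_succ_eq hσmeas hval (hF_le n) (by omega)
      (hmodel n hn 1 (.inl rfl))]
    field_simp
    ring

/-- ERW explicit mean: `E[S_n] = (2q-1) Γ(n+2p-1) / (Γ(2p) Γ(n))`. -/
theorem erw_mean_formula
    {Ω : Type*} {m0 : MeasurableSpace Ω} (μ : Measure Ω) [IsProbabilityMeasure μ]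
    (p q : ℝ) (hp : p ∈ Set.Icc (0:ℝ) 1) (hq : q ∈ Set.Icc (0:ℝ) 1)
    (σ : ℕ → Ω → ℝ) (hσmeas : ∀ k, Measurable (σ k))
    (hval : ∀ k ≥ 1, ∀ᵐ ω ∂μ, σ k ω = 1 ∨ σ k ω = -1)
    (hq1 : μ {ω | σ 1 ω = 1} = ENNReal.ofReal q)
    (F : ℕ → MeasurableSpace Ω)
    (hF : ∀ n, F n = ⨆ k ∈ Set.Icc 1 n, MeasurableSpace.comap (σ k) inferInstance)
    (S : ℕ → Ω → ℝ) (hS : ∀ n ω, S n ω = ∑ k ∈ Finset.Icc 1 n, σ k ω)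
    (hmodel : ∀ n ≥ 1, ∀ s : ℝ, (s = 1 ∨ s = -1) →
      μ[(fun ω => if σ (n+1) ω = s then (1:ℝ) else 0) | F n]
        =ᵐ[μ] fun ω => (n : ℝ)⁻¹ * ∑ k ∈ Finset.Icc 1 n,
          (p * (if σ k ω = s then (1:ℝ) else 0)
            + (1 - p) * (if σ k ω = -s then (1:ℝ) else 0)))
    (hp' : p ∈ Set.Ioo (0:ℝ) 1) :
    ∀ n : ℕ, 1 ≤ n →
      ∫ ω, S n ω ∂μ =
        (2 * q - 1) * Real.Gamma ((n : ℝ) + 2 * p - 1)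
          / (Real.Gamma (2 * p) * Real.Gamma (n : ℝ)) :=
  erw_mean_formula_general (m0 := m0) μ p q hq σ hσmeas hval hq1 F hF S hS hmodel hp'
end

section
/- For the elephant random walk with p ∈ (0,1), the mean displacement satisfies the asymptotic E[S_n] ~ (2q−1)·n^{2p−1}/Γ(2p) as n → ∞; more precisely, E[S_n]/n^{2p−1} → (2q−1)/Γ(2p). -/
/-!
Conditioning on the past, the step σ_{n+1} has mean (2p-1) S_n / n, so the means satisfy
E[S_{n+1}] = E[S_n] (n + 2p - 1) / n with E[S_1] = 2q - 1, i.e.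
E[S_n] = (2q-1) ∏_{1 ≤ k < n} (k + s) / k with s = 2p - 1 > -1. Multiplying ∏_{1 ≤ k ≤ n} (k + s) / k
by Euler's sequence `GammaSeq (s + 1) n = n^{s+1} n! / ∏_{0 ≤ j ≤ n} (s + 1 + j)` leaves
n^{s+1} / (n + s + 1), so Euler's limit formula `GammaSeq (s + 1) n → Γ(s + 1)` shows that the
product grows like n^s / Γ(s + 1).
-/

open MeasureTheory Filter Finset Topology

lemma eq_mul_prod_Ico_of_succ_eq_mul {M : Type*} [CommMonoid M] {f r : ℕ → M} {m : ℕ}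
    (h : ∀ n ≥ m, f (n + 1) = f n * r n) {n : ℕ} (hn : m ≤ n) :
    f n = f m * ∏ k ∈ Ico m n, r k := by
  induction n, hn using Nat.le_induction with
  | base => simp
  | succ n hn ih => rw [h n hn, ih, prod_Ico_succ_top hn, mul_assoc]

lemma prod_Ico_add_div_mul_GammaSeq {s : ℝ} (hs : -1 < s) (n : ℕ) :
    (∏ k ∈ Ico 1 (n + 1), ((k : ℝ) + s) / k) * Real.GammaSeq (s + 1) n
      = (n : ℝ) ^ (s + 1) / (n + (s + 1)) := by
  have hnum : ∏ j ∈ range (n + 1), (s + 1 + j)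
      = (∏ k ∈ Ico 1 (n + 1), ((k : ℝ) + s)) * (n + (s + 1)) := by
    rw [prod_range_succ, prod_Ico_eq_prod_range, Nat.add_sub_cancel]
    congr 1
    · exact prod_congr rfl fun j _ => by push_cast; ring
    · ring
  have hden : ∏ k ∈ Ico 1 (n + 1), (k : ℝ) = n.factorial := by
    rw [← Nat.cast_prod, prod_Ico_id_eq_factorial]
  have hpos : 0 < ∏ k ∈ Ico 1 (n + 1), ((k : ℝ) + s) :=
    prod_pos fun k hk => by linarith [show (1 : ℝ) ≤ k from mod_cast (mem_Ico.mp hk).1]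
  have hfac : (0 : ℝ) < n.factorial := by exact_mod_cast n.factorial_pos
  have hlast : (0 : ℝ) < n + (s + 1) := by linarith [n.cast_nonneg (α := ℝ)]
  rw [Real.GammaSeq, hnum, prod_div_distrib, hden]
  field_simp

theorem tendsto_prod_Ico_add_div_div_rpow {s : ℝ} (hs : -1 < s) :
    Tendsto (fun n : ℕ => (∏ k ∈ Ico 1 n, ((k : ℝ) + s) / k) / (n : ℝ) ^ s)
      atTop (𝓝 (Real.Gamma (s + 1))⁻¹) := by
  have hΓ : Real.Gamma (s + 1) ≠ 0 := (Real.Gamma_pos_of_pos (by linarith)).ne'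
  have hG := Real.GammaSeq_tendsto_Gamma (s + 1)
  rw [← tendsto_add_atTop_iff_nat 1]
  have hratio : Tendsto (fun n : ℕ => ((n : ℝ) / (n + 1)) ^ s) atTop (𝓝 1) := by
    simpa [Function.comp_def] using ((Real.continuousAt_rpow_const 1 s
      (Or.inl one_ne_zero)).tendsto.comp (tendsto_natCast_div_add_atTop (1 : ℝ)))
  have hlim := (hratio.mul (tendsto_natCast_div_add_atTop (s + 1))).div hG hΓ
  rw [mul_one, one_div] at hlim
  refine hlim.congr' ?_
  filter_upwards [eventually_ge_atTop 1, hG.eventually_ne hΓ] with n hn hGn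
  have hn0 : (0 : ℝ) < n := by exact_mod_cast hn
  have hlast : (0 : ℝ) < n + (s + 1) := by linarith
  simp only [Pi.div_apply]
  rw [eq_div_of_mul_eq hGn (prod_Ico_add_div_mul_GammaSeq hs n), Real.rpow_add_one hn0.ne',
    Real.div_rpow hn0.le (by positivity), Nat.cast_add_one]
  field_simp

section Walk

variable {Ω : Type*} {m0 : MeasurableSpace Ω} {μ : Measure Ω}

lemma integral_eq_two_mul_measureReal_sub_one [IsProbabilityMeasure μ] {X : Ω → ℝ}
    (hX : Measurable X) (hval : ∀ᵐ ω ∂μ, X ω = 1 ∨ X ω = -1) :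
    ∫ ω, X ω ∂μ = 2 * μ.real {ω | X ω = 1} - 1 := by
  have hset : MeasurableSet {ω | X ω = 1} := hX (measurableSet_singleton 1)
  calc ∫ ω, X ω ∂μ = ∫ ω, (2 * {ω | X ω = 1}.indicator 1 ω - 1) ∂μ := by
        refine integral_congr_ae (hval.mono fun ω hω => ?_)
        rcases hω with h | h <;> simp [Set.indicator, h] <;> norm_num
    _ = 2 * μ.real {ω | X ω = 1} - 1 := by
        rw [integral_sub ((integrable_indicator_iff hset).2 (integrable_const 1).integrableOn
            |>.const_mul 2) (integrable_const 1), integral_const_mul, integral_indicator_one hset]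
        simp

lemma condExp_succ_ae_eq [IsFiniteMeasure μ] {p : ℝ} {σ : ℕ → Ω → ℝ} {F : ℕ → MeasurableSpace Ω}
    (hσmeas : ∀ k, Measurable (σ k)) (hval : ∀ k ≥ 1, ∀ᵐ ω ∂μ, σ k ω = 1 ∨ σ k ω = -1)
    (hmodel : ∀ n ≥ 1, ∀ s : ℝ, (s = 1 ∨ s = -1) →
      μ[(fun ω => if σ (n+1) ω = s then (1:ℝ) else 0) | F n]
        =ᵐ[μ] fun ω => (n : ℝ)⁻¹ * ∑ k ∈ Finset.Icc 1 n,
          (p * (if σ k ω = s then (1:ℝ) else 0)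
            + (1 - p) * (if σ k ω = -s then (1:ℝ) else 0)))
    {n : ℕ} (hn : 1 ≤ n) :
    μ[σ (n + 1) | F n] =ᵐ[μ] fun ω => (2 * p - 1) * ((n : ℝ)⁻¹ * ∑ k ∈ Icc 1 n, σ k ω) := by
  let ind (c : ℝ) (ω : Ω) : ℝ := if σ (n + 1) ω = c then 1 else 0
  have hind (c : ℝ) : Integrable (ind c) μ :=
    .of_bound (Measurable.ite (hσmeas _ (measurableSet_singleton c)) measurable_const
      measurable_const).aestronglyMeasurable 1
      (ae_of_all _ fun ω => by simp only [ind]; split_ifs <;> simp)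
  have hsplit : σ (n + 1) =ᵐ[μ] ind 1 - ind (-1) := by
    filter_upwards [hval (n + 1) (by omega)] with ω hω
    rcases hω with h | h <;> simp [ind, h] <;> norm_num
  have hweight (x : ℝ) (hx : x = 1 ∨ x = -1) :
      (p * (if x = 1 then 1 else 0) + (1 - p) * (if x = -1 then 1 else 0))
        - (p * (if x = -1 then 1 else 0) + (1 - p) * (if x = 1 then 1 else 0))
        = (2 * p - 1) * x := by
    rcases hx with rfl | rfl <;> norm_num <;> ring
  have hpast : ∀ᵐ ω ∂μ, ∀ k ∈ Icc 1 n, σ k ω = 1 ∨ σ k ω = -1 :=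
    (eventually_all_finset _).2 fun k hk => hval k (mem_Icc.mp hk).1
  calc μ[σ (n + 1) | F n] =ᵐ[μ] μ[ind 1 - ind (-1) | F n] := condExp_congr_ae hsplit
    _ =ᵐ[μ] μ[ind 1 | F n] - μ[ind (-1) | F n] := condExp_sub (hind 1) (hind (-1)) _
    _ =ᵐ[μ] _ := (hmodel n hn 1 (Or.inl rfl)).sub (hmodel n hn (-1) (Or.inr rfl))
    _ =ᵐ[μ] _ := by
      filter_upwards [hpast] with ω hω
      simp only [Pi.sub_apply, neg_neg]
      rw [← mul_sub, ← sum_sub_distrib,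
        sum_congr rfl fun k hk => hweight (σ k ω) (hω k hk), ← mul_sum]
      ring

lemma integral_sum_Icc_succ_eq_mul [IsFiniteMeasure μ] {a : ℝ} {σ : ℕ → Ω → ℝ}
    {F : MeasurableSpace Ω} (hF : F ≤ m0) (hint : ∀ k ≥ 1, Integrable (σ k) μ) {n : ℕ}
    (hn : 1 ≤ n)
    (hstep : μ[σ (n + 1) | F] =ᵐ[μ] fun ω => a * ((n : ℝ)⁻¹ * ∑ k ∈ Icc 1 n, σ k ω)) :
    ∫ ω, ∑ k ∈ Icc 1 (n + 1), σ k ω ∂μ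
      = (∫ ω, ∑ k ∈ Icc 1 n, σ k ω ∂μ) * ((n + a) / n) := by
  have hsum : Integrable (fun ω => ∑ k ∈ Icc 1 n, σ k ω) μ :=
    integrable_finsetSum _ fun k hk => hint k (mem_Icc.mp hk).1
  have hmean : ∫ ω, σ (n + 1) ω ∂μ = a * ((n : ℝ)⁻¹ * ∫ ω, ∑ k ∈ Icc 1 n, σ k ω ∂μ) := by
    rw [← integral_condExp hF, integral_congr_ae hstep, integral_const_mul, integral_const_mul]
  have hn0 : (n : ℝ) ≠ 0 := by positivity
  simp_rw [sum_Icc_succ_top (by omega : 1 ≤ n + 1)]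
  rw [integral_add hsum (hint _ (by omega)), hmean]
  field_simp

end Walk

theorem erw_mean_asymptotics_general
    {Ω : Type*} {m0 : MeasurableSpace Ω} (μ : Measure Ω) [IsProbabilityMeasure μ]
    (p q : ℝ) (hq : q ∈ Set.Icc (0:ℝ) 1)
    (σ : ℕ → Ω → ℝ) (hσmeas : ∀ k, Measurable (σ k))
    (hval : ∀ k ≥ 1, ∀ᵐ ω ∂μ, σ k ω = 1 ∨ σ k ω = -1)
    (hq1 : μ {ω | σ 1 ω = 1} = ENNReal.ofReal q)
    (F : ℕ → MeasurableSpace Ω)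
    (hF : ∀ n, F n = ⨆ k ∈ Set.Icc 1 n, MeasurableSpace.comap (σ k) inferInstance)
    (S : ℕ → Ω → ℝ) (hS : ∀ n ω, S n ω = ∑ k ∈ Finset.Icc 1 n, σ k ω)
    (hmodel : ∀ n ≥ 1, ∀ s : ℝ, (s = 1 ∨ s = -1) →
      μ[(fun ω => if σ (n+1) ω = s then (1:ℝ) else 0) | F n]
        =ᵐ[μ] fun ω => (n : ℝ)⁻¹ * ∑ k ∈ Finset.Icc 1 n,
          (p * (if σ k ω = s then (1:ℝ) else 0)
            + (1 - p) * (if σ k ω = -s then (1:ℝ) else 0)))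
    (hp' : p ∈ Set.Ioo (0:ℝ) 1) :
    Tendsto (fun n : ℕ => (∫ ω, S n ω ∂μ) / (n : ℝ) ^ (2 * p - 1))
      atTop (nhds ((2 * q - 1) / Real.Gamma (2 * p))) := by
  obtain rfl : S = fun n ω => ∑ k ∈ Icc 1 n, σ k ω := funext fun n => funext (hS n)
  have hFle (n : ℕ) : F n ≤ m0 := hF n ▸ iSup₂_le fun k _ => (hσmeas k).comap_le
  have hint (k : ℕ) (hk : k ≥ 1) : Integrable (σ k) μ :=
    .of_bound (hσmeas k).aestronglyMeasurable 1
      ((hval k hk).mono fun ω hω => by rcases hω with h | h <;> simp [h])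
  have hmean1 : ∫ ω, ∑ k ∈ Icc 1 1, σ k ω ∂μ = 2 * q - 1 := by
    rw [Icc_self, integral_congr_ae (ae_of_all _ fun ω => sum_singleton _ _),
      integral_eq_two_mul_measureReal_sub_one (hσmeas 1) (hval 1 le_rfl), measureReal_def, hq1,
      ENNReal.toReal_ofReal hq.1]
  have hmean (n : ℕ) (hn : 1 ≤ n) :
      ∫ ω, ∑ k ∈ Icc 1 n, σ k ω ∂μ = (2 * q - 1) * ∏ k ∈ Ico 1 n, ((k : ℝ) + (2 * p - 1)) / k :=
    hmean1 ▸ eq_mul_prod_Ico_of_succ_eq_mul (f := fun n => ∫ ω, ∑ k ∈ Icc 1 n, σ k ω ∂μ)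
      (fun n hn => integral_sum_Icc_succ_eq_mul (hFle n) hint hn
        (condExp_succ_ae_eq hσmeas hval hmodel hn)) hn
  have hlim := (tendsto_prod_Ico_add_div_div_rpow (s := 2 * p - 1)
    (by linarith [hp'.1])).const_mul (2 * q - 1)
  rw [sub_add_cancel, ← div_eq_mul_inv] at hlim
  refine hlim.congr' ?_
  filter_upwards [eventually_ge_atTop 1] with n hn
  rw [hmean n hn, mul_div_assoc]

/-- ERW mean displacement asymptotics: `E[S_n]/n^{2p-1} → (2q-1)/Γ(2p)`. -/
theorem erw_mean_asymptotics
    {Ω : Type*} {m0 : MeasurableSpace Ω} (μ : Measure Ω) [IsProbabilityMeasure μ]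
    (p q : ℝ) (hp : p ∈ Set.Icc (0:ℝ) 1) (hq : q ∈ Set.Icc (0:ℝ) 1)
    (σ : ℕ → Ω → ℝ) (hσmeas : ∀ k, Measurable (σ k))
    (hval : ∀ k ≥ 1, ∀ᵐ ω ∂μ, σ k ω = 1 ∨ σ k ω = -1)
    (hq1 : μ {ω | σ 1 ω = 1} = ENNReal.ofReal q)
    (F : ℕ → MeasurableSpace Ω)
    (hF : ∀ n, F n = ⨆ k ∈ Set.Icc 1 n, MeasurableSpace.comap (σ k) inferInstance)
    (S : ℕ → Ω → ℝ) (hS : ∀ n ω, S n ω = ∑ k ∈ Finset.Icc 1 n, σ k ω)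
    (hmodel : ∀ n ≥ 1, ∀ s : ℝ, (s = 1 ∨ s = -1) →
      μ[(fun ω => if σ (n+1) ω = s then (1:ℝ) else 0) | F n]
        =ᵐ[μ] fun ω => (n : ℝ)⁻¹ * ∑ k ∈ Finset.Icc 1 n,
          (p * (if σ k ω = s then (1:ℝ) else 0)
            + (1 - p) * (if σ k ω = -s then (1:ℝ) else 0)))
    (hp' : p ∈ Set.Ioo (0:ℝ) 1) :
    Tendsto (fun n : ℕ => (∫ ω, S n ω ∂μ) / (n : ℝ) ^ (2 * p - 1))
      atTop (nhds ((2 * q - 1) / Real.Gamma (2 * p))) :=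
  erw_mean_asymptotics_general (m0 := m0) μ p q hq σ hσmeas hval hq1 F hF S hS hmodel hp'
end

section
/- For the elephant random walk with 3/4 < p < 1, the martingale M_n = S_n/a_n (with a_n = Γ(n+2p−1)/(Γ(2p)Γ(n))) is bounded in L^2, i.e., sup_n E[M_n^2] < ∞. Consequently M_n converges almost surely and in L^2 to a limit Y, and S_n/n^{2p−1} converges almost surely. -/
/-!
Given the past, `E[σ (n + 1) | F n] = (2p - 1) S n / n`, and `a (n + 1) = a n (n + 2p - 1) / n`,
so `M n = S n / a n` is a martingale whose increment `M (n + 1) - M n` is the innovation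
`σ (n + 1) - E[σ (n + 1) | F n]` divided by `a (n + 1)`; its second moment is at most
`a (n + 1)⁻²`. Euler's limit formula for `Γ` gives `a n ~ n ^ (2p - 1) / Γ(2p)`, so these
second moments are summable precisely because `p > 3/4`. Orthogonality of martingale increments
then bounds `E[M n ^ 2]` and makes `M` Cauchy in `L²`; the martingale convergence theorem gives
the a.s. limit, Fatou's lemma identifies it as the `L²` limit, and
`S n / n ^ (2p - 1) = M n · a n / n ^ (2p - 1)` converges a.s. as well.
-/

open MeasureTheory Filter Topology ProbabilityTheory

namespace Real

lemma Gamma_add_nat_eq_mul_prod {s : ℝ} (hs : 0 < s) (n : ℕ) :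
    Gamma (s + n) = Gamma s * ∏ j ∈ Finset.range n, (s + j) := by
  induction n with
  | zero => simp
  | succ n ih =>
    rw [Nat.cast_succ, ← add_assoc, Gamma_add_one (by positivity), ih, Finset.prod_range_succ]
    ring

theorem tendsto_Gamma_nat_add_div_mul_rpow {s : ℝ} (hs : 0 < s) :
    Tendsto (fun n : ℕ => Gamma (n + s) / (Gamma n * (n : ℝ) ^ s)) atTop (𝓝 1) := by
  have hΓs : Gamma s ≠ 0 := (Gamma_pos_of_pos hs).ne'
  have hEuler : Tendsto (fun n : ℕ => n / (n + s) * (Gamma s / GammaSeq s n)) atTop (𝓝 1) := by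
    have := (tendsto_natCast_div_add_atTop s).mul
      ((tendsto_const_nhds (x := Gamma s)).div (GammaSeq_tendsto_Gamma s) hΓs)
    rwa [div_self hΓs, mul_one] at this
  refine hEuler.congr' ?_
  filter_upwards [eventually_ge_atTop 1] with n hn
  have hn0 : (0 : ℝ) < n := by exact_mod_cast hn
  have hsn : Gamma (s + (n + 1)) = (n + s) * Gamma (n + s) := by
    rw [← add_assoc, Gamma_add_one (by positivity), add_comm s]
  have hfac : (n.factorial : ℝ) = n * Gamma n := by
    rw [← Gamma_nat_eq_factorial, Gamma_add_one hn0.ne']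
  have hprod : ∏ j ∈ Finset.range (n + 1), (s + j) = (n + s) * Gamma (n + s) / Gamma s := by
    rw [← hsn, eq_div_iff hΓs, mul_comm, ← Nat.cast_add_one, Gamma_add_nat_eq_mul_prod hs]
  have := (Gamma_pos_of_pos hn0).ne'
  have := (Gamma_pos_of_pos (add_pos hn0 hs)).ne'
  rw [GammaSeq, hfac, hprod]
  field_simp

end Real

namespace MeasureTheory

variable {Ω : Type*} {m0 : MeasurableSpace Ω} {μ : Measure Ω}

lemma integral_sq_sub_condExp_le {m : MeasurableSpace Ω} (hm : m ≤ m0) [IsFiniteMeasure μ]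
    {X : Ω → ℝ} (hX : MemLp X 2 μ) :
    ∫ ω, (X ω - μ[X|m] ω) ^ 2 ∂μ ≤ ∫ ω, X ω ^ 2 ∂μ :=
  calc ∫ ω, (X ω - μ[X|m] ω) ^ 2 ∂μ = ∫ ω, Var[X; μ | m] ω ∂μ := (integral_condExp hm).symm
    _ ≤ ∫ ω, μ[X ^ 2|m] ω ∂μ :=
      integral_mono_ae integrable_condVar integrable_condExp (condVar_ae_le_condExp_sq hm hX)
    _ = ∫ ω, X ω ^ 2 ∂μ := integral_condExp hm

lemma integral_sq_le_of_ae_eq_smul_sub_condExp {m : MeasurableSpace Ω} (hm : m ≤ m0)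
    [IsFiniteMeasure μ] {D X : Ω → ℝ} (hX : MemLp X 2 μ) {c : ℝ}
    (hD : D =ᵐ[μ] c • (X - μ[X|m])) : ∫ ω, D ω ^ 2 ∂μ ≤ c ^ 2 * ∫ ω, X ω ^ 2 ∂μ :=
  calc ∫ ω, D ω ^ 2 ∂μ = c ^ 2 * ∫ ω, (X ω - μ[X|m] ω) ^ 2 ∂μ := by
        rw [← integral_const_mul]
        refine integral_congr_ae ?_
        filter_upwards [hD] with ω h
        simp [h, mul_pow]
    _ ≤ c ^ 2 * ∫ ω, X ω ^ 2 ∂μ :=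
      mul_le_mul_of_nonneg_left (integral_sq_sub_condExp_le hm hX) (sq_nonneg c)

lemma memLp_of_ae_eq_one_or_neg_one [IsFiniteMeasure μ] {f : Ω → ℝ} (hf : Measurable f)
    (h : ∀ᵐ ω ∂μ, f ω = 1 ∨ f ω = -1) {q : ENNReal} : MemLp f q μ :=
  MemLp.of_bound hf.aestronglyMeasurable 1 <| by
    filter_upwards [h] with ω hω
    rcases hω with hω | hω <;> simp [hω]

lemma integral_sq_eq_one_of_ae_eq_one_or_neg_one [IsProbabilityMeasure μ] {f : Ω → ℝ}
    (h : ∀ᵐ ω ∂μ, f ω = 1 ∨ f ω = -1) : ∫ ω, f ω ^ 2 ∂μ = 1 := by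
  rw [integral_congr_ae (g := fun _ => 1) ?_, integral_const, probReal_univ, one_smul]
  filter_upwards [h] with ω hω
  rcases hω with hω | hω <;> simp [hω]

lemma integral_le_of_ae_tendsto {f : ℕ → Ω → ℝ} {g : Ω → ℝ} (hf : ∀ n, Integrable (f n) μ)
    (hf0 : ∀ n, 0 ≤ᵐ[μ] f n) (hlim : ∀ᵐ ω ∂μ, Tendsto (fun n => f n ω) atTop (𝓝 (g ω)))
    {C : ℝ} (hC : ∀ᶠ n in atTop, ∫ ω, f n ω ∂μ ≤ C) : ∫ ω, g ω ∂μ ≤ C := by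
  obtain ⟨n, hn⟩ := hC.exists
  have hg0 : 0 ≤ᵐ[μ] g := by
    filter_upwards [hlim, ae_all_iff.2 hf0] with ω hω h0 using ge_of_tendsto' hω h0
  rw [integral_eq_lintegral_of_nonneg_ae hg0
    (aestronglyMeasurable_of_tendsto_ae atTop (fun n => (hf n).1) hlim)]
  refine ENNReal.toReal_le_of_le_ofReal ((integral_nonneg_of_ae (hf0 n)).trans hn) ?_
  calc ∫⁻ ω, ENNReal.ofReal (g ω) ∂μ
      = ∫⁻ ω, liminf (fun n => ENNReal.ofReal (f n ω)) atTop ∂μ := lintegral_congr_ae <| by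
        filter_upwards [hlim] with ω hω
        exact ((ENNReal.continuous_ofReal.tendsto _).comp hω).liminf_eq.symm
    _ ≤ liminf (fun n => ∫⁻ ω, ENNReal.ofReal (f n ω) ∂μ) atTop :=
      lintegral_liminf_le' fun n => (hf n).1.aemeasurable.ennreal_ofReal
    _ ≤ ENNReal.ofReal C := liminf_le_of_frequently_le' <| hC.frequently.mono fun n hn => by
        rw [← ofReal_integral_eq_lintegral_ofReal (hf n) (hf0 n)]
        exact ENNReal.ofReal_le_ofReal hn

lemma eLpNorm_one_le_of_integral_sq_le [IsProbabilityMeasure μ] {f : Ω → ℝ} (hf : MemLp f 2 μ)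
    {C : ℝ} (hC : ∫ ω, f ω ^ 2 ∂μ ≤ C) : eLpNorm f 1 μ ≤ ENNReal.ofReal ((1 + C) / 2) := by
  have hint : Integrable f μ := hf.integrable one_le_two
  rw [eLpNorm_one_eq_lintegral_enorm, ← ofReal_integral_norm_eq_lintegral_enorm hint]
  refine ENNReal.ofReal_le_ofReal ?_
  calc ∫ ω, ‖f ω‖ ∂μ ≤ ∫ ω, (1 + f ω ^ 2) / 2 ∂μ :=
        integral_mono hint.norm (((integrable_const 1).add hf.integrable_sq).div_const 2)
          fun ω => by nlinarith [sq_nonneg (|f ω| - 1), sq_abs (f ω), Real.norm_eq_abs (f ω)]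
    _ = (1 + ∫ ω, f ω ^ 2 ∂μ) / 2 := by
        rw [integral_div, integral_add (integrable_const 1) hf.integrable_sq]
        simp
    _ ≤ (1 + C) / 2 := by linarith

variable {ℱ : Filtration ℕ m0} {M : ℕ → Ω → ℝ}

lemma martingale_of_sub_ae_eq_smul_sub_condExp [IsFiniteMeasure μ] (hadp : StronglyAdapted ℱ M)
    (hM : ∀ n, Integrable (M n) μ) {X : ℕ → Ω → ℝ} (hX : ∀ n, Integrable (X n) μ) {c : ℕ → ℝ}
    (hinc : ∀ n, M (n + 1) - M n =ᵐ[μ] c n • (X n - μ[X n|ℱ n])) : Martingale M ℱ μ := by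
  refine martingale_nat hadp hM fun n => ?_
  have hsplit : M (n + 1) =ᵐ[μ] M n + c n • (X n - μ[X n|ℱ n]) := by
    filter_upwards [hinc n] with ω h
    simp only [Pi.sub_apply, Pi.add_apply] at h ⊢
    rw [← h, add_sub_cancel]
  have hcentered : μ[X n - μ[X n|ℱ n]|ℱ n] =ᵐ[μ] 0 := by
    filter_upwards [condExp_sub (m := ℱ n) (hX n) (integrable_condExp (m := ℱ n) (f := X n)),
      condExp_condExp_of_le (μ := μ) (f := X n) le_rfl (ℱ.le n)] with ω h1 h2
    simp [h1, h2]
  symm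
  calc μ[M (n + 1)|ℱ n] =ᵐ[μ] μ[M n + c n • (X n - μ[X n|ℱ n])|ℱ n] := condExp_congr_ae hsplit
    _ =ᵐ[μ] μ[M n|ℱ n] + μ[c n • (X n - μ[X n|ℱ n])|ℱ n] :=
      condExp_add (hM n) (((hX n).sub integrable_condExp).smul _) _
    _ =ᵐ[μ] M n := by
      rw [condExp_of_stronglyMeasurable (ℱ.le n) (hadp n) (hM n)]
      filter_upwards [condExp_smul (m := ℱ n) (μ := μ) (c n) (X n - μ[X n|ℱ n]), hcentered]
        with ω h1 h2
      simp [h1, h2]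

lemma Martingale.integral_mul_sub_eq_zero [IsFiniteMeasure μ] (hM : Martingale M ℱ μ)
    (hM2 : ∀ n, MemLp (M n) 2 μ) {i j : ℕ} (hij : i ≤ j) {G : Ω → ℝ}
    (hG : StronglyMeasurable[ℱ i] G) (hG2 : MemLp G 2 μ) :
    ∫ ω, G ω * (M j ω - M i ω) ∂μ = 0 := by
  have hGM : ∀ k, Integrable (fun ω => G ω * M k ω) μ := fun k => hG2.integrable_mul (hM2 k)
  have hproj : ∫ ω, G ω * M j ω ∂μ = ∫ ω, G ω * M i ω ∂μ :=
    calc ∫ ω, G ω * M j ω ∂μ = ∫ ω, μ[G * M j|ℱ i] ω ∂μ := (integral_condExp (ℱ.le i)).symm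
      _ = ∫ ω, G ω * M i ω ∂μ := integral_congr_ae <| by
        filter_upwards [condExp_mul_of_stronglyMeasurable_left hG (hGM j) (hM.integrable j),
          hM.condExp_ae_eq hij] with ω h1 h2
        simp [h1, h2]
  simp_rw [mul_sub]
  rw [integral_sub (hGM j) (hGM i), hproj, sub_self]

lemma Martingale.integral_sq_sub_eq_add_sum [IsFiniteMeasure μ] (hM : Martingale M ℱ μ)
    (hM2 : ∀ n, MemLp (M n) 2 μ) {n : ℕ} {G : Ω → ℝ} (hG : StronglyMeasurable[ℱ n] G)
    (hG2 : MemLp G 2 μ) {m : ℕ} (hnm : n ≤ m) :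
    ∫ ω, (M m ω - G ω) ^ 2 ∂μ = ∫ ω, (M n ω - G ω) ^ 2 ∂μ +
      ∑ k ∈ Finset.Ico n m, ∫ ω, (M (k + 1) ω - M k ω) ^ 2 ∂μ := by
  induction m, hnm using Nat.le_induction with
  | base => simp
  | succ m hnm ih =>
    have hD : MemLp (M m - G) 2 μ := (hM2 m).sub hG2
    have hinc : MemLp (M (m + 1) - M m) 2 μ := (hM2 (m + 1)).sub (hM2 m)
    have horth := hM.integral_mul_sub_eq_zero hM2 (Nat.le_add_right m 1)
      ((hM.stronglyAdapted m).sub (hG.mono (ℱ.mono hnm))) hD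
    have hDsq : Integrable (fun ω => (M m ω - G ω) ^ 2) μ := hD.integrable_sq
    have hincsq : Integrable (fun ω => (M (m + 1) ω - M m ω) ^ 2) μ := hinc.integrable_sq
    have hcross : Integrable (fun ω => 2 * ((M m ω - G ω) * (M (m + 1) ω - M m ω))) μ :=
      (hD.integrable_mul hinc).const_mul 2
    simp only [Pi.sub_apply] at horth
    have hexpand : ∀ ω, (M (m + 1) ω - G ω) ^ 2 = (M m ω - G ω) ^ 2
        + 2 * ((M m ω - G ω) * (M (m + 1) ω - M m ω)) + (M (m + 1) ω - M m ω) ^ 2 :=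
      fun ω => by ring
    simp_rw [hexpand]
    have hfirst : Integrable (fun ω => (M m ω - G ω) ^ 2
        + 2 * ((M m ω - G ω) * (M (m + 1) ω - M m ω))) μ := hDsq.add hcross
    rw [integral_add hfirst hincsq, integral_add hDsq hcross, integral_const_mul, horth,
      Finset.sum_Ico_succ_top hnm, ih]
    ring

theorem Martingale.exists_ae_tendsto_of_summable_integral_sq_sub [IsProbabilityMeasure μ]
    (hM : Martingale M ℱ μ) (hM2 : ∀ n, MemLp (M n) 2 μ)
    (hsum : Summable fun n => ∫ ω, (M (n + 1) ω - M n ω) ^ 2 ∂μ) :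
    (∃ C, ∀ n, ∫ ω, M n ω ^ 2 ∂μ ≤ C) ∧ ∃ Y : Ω → ℝ,
      (∀ᵐ ω ∂μ, Tendsto (fun n => M n ω) atTop (𝓝 (Y ω))) ∧
      Tendsto (fun n => ∫ ω, (M n ω - Y ω) ^ 2 ∂μ) atTop (𝓝 0) := by
  set d := fun n => ∫ ω, (M (n + 1) ω - M n ω) ^ 2 ∂μ
  have hd0 : ∀ n, 0 ≤ d n := fun n => integral_nonneg fun ω => sq_nonneg _
  have hbdd : ∀ n, ∫ ω, M n ω ^ 2 ∂μ ≤ ∫ ω, M 0 ω ^ 2 ∂μ + ∑' k, d k := by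
    intro n
    have h := hM.integral_sq_sub_eq_add_sum hM2 stronglyMeasurable_const
      (memLp_const (0 : ℝ)) n.zero_le
    simp only [sub_zero] at h
    rw [h]
    gcongr
    exact hsum.sum_le_tsum _ fun k _ => hd0 k
  have hcauchy : ∀ n m, n ≤ m → ∫ ω, (M m ω - M n ω) ^ 2 ∂μ ≤ ∑' k, d (k + n) := by
    intro n m hnm
    rw [hM.integral_sq_sub_eq_add_sum hM2 (hM.stronglyAdapted n) (hM2 n) hnm,
      Finset.sum_Ico_eq_sum_range]
    simp only [sub_self, zero_pow two_ne_zero, integral_zero, zero_add]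
    simp_rw [add_comm n]
    exact ((summable_nat_add_iff n).2 hsum).sum_le_tsum _ fun k _ => hd0 _
  have hae := hM.submartingale.ae_tendsto_limitProcess fun n =>
    eLpNorm_one_le_of_integral_sq_le (hM2 n) (hbdd n)
  refine ⟨⟨_, hbdd⟩, ℱ.limitProcess M μ, hae, ?_⟩
  refine squeeze_zero (fun n => integral_nonneg fun ω => sq_nonneg _) (fun n => ?_)
    (tendsto_sum_nat_add d)
  calc ∫ ω, (M n ω - ℱ.limitProcess M μ ω) ^ 2 ∂μ
      = ∫ ω, (ℱ.limitProcess M μ ω - M n ω) ^ 2 ∂μ := by simp_rw [sub_sq_comm (M n _)]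
    _ ≤ ∑' k, d (k + n) :=
      integral_le_of_ae_tendsto (fun m => ((hM2 m).sub (hM2 n)).integrable_sq)
        (fun m => ae_of_all _ fun ω => sq_nonneg _)
        (by filter_upwards [hae] with ω hω using (hω.sub_const _).pow 2)
        ((eventually_ge_atTop n).mono fun m hm => hcauchy n m hm)

end MeasureTheory

namespace ElephantRandomWalk

noncomputable def scale (p : ℝ) (n : ℕ) : ℝ :=
  Real.Gamma ((n : ℝ) + 2 * p - 1) / (Real.Gamma (2 * p) * Real.Gamma (n : ℝ))

variable {p : ℝ} {a : ℕ → ℝ}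

lemma scale_pos (hp : 0 < p) (ha : ∀ n : ℕ, 1 ≤ n → a n = scale p n) {n : ℕ} (hn : 1 ≤ n) :
    0 < a n := by
  have hn' : (1 : ℝ) ≤ n := by exact_mod_cast hn
  rw [ha n hn, scale]
  exact div_pos (Real.Gamma_pos_of_pos (by linarith))
    (mul_pos (Real.Gamma_pos_of_pos (by linarith)) (Real.Gamma_pos_of_pos (by linarith)))

lemma scale_succ (hp : 0 < p) (ha : ∀ n : ℕ, 1 ≤ n → a n = scale p n) {n : ℕ} (hn : 1 ≤ n) :
    a (n + 1) = a n * ((n + (2 * p - 1)) / n) := by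
  have hn' : (1 : ℝ) ≤ n := by exact_mod_cast hn
  have hshift : ((n + 1 : ℕ) : ℝ) + 2 * p - 1 = (n + 2 * p - 1) + 1 := by push_cast; ring
  rw [ha n hn, ha (n + 1) (by omega), scale, scale, hshift, Nat.cast_succ,
    Real.Gamma_add_one (by linarith), Real.Gamma_add_one (by linarith)]
  have := (Real.Gamma_pos_of_pos (by linarith : (0 : ℝ) < n)).ne'
  field_simp
  ring

lemma tendsto_scale_div_rpow (hp : 1 / 2 < p) (ha : ∀ n : ℕ, 1 ≤ n → a n = scale p n) :
    Tendsto (fun n : ℕ => a n / (n : ℝ) ^ (2 * p - 1)) atTop (𝓝 (Real.Gamma (2 * p))⁻¹) := by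
  have h := (Real.tendsto_Gamma_nat_add_div_mul_rpow (s := 2 * p - 1) (by linarith)).const_mul
    (Real.Gamma (2 * p))⁻¹
  rw [mul_one] at h
  refine h.congr' ?_
  filter_upwards [eventually_ge_atTop 1] with n hn
  rw [ha n hn, scale, add_sub_assoc]
  ring

lemma summable_inv_scale_sq (hp : 3 / 4 < p) (ha : ∀ n : ℕ, 1 ≤ n → a n = scale p n) :
    Summable fun n => (a n ^ 2)⁻¹ := by
  have hΓ : (Real.Gamma (2 * p))⁻¹ ≠ 0 := (inv_pos.2 (Real.Gamma_pos_of_pos (by linarith))).ne'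
  have hO := ((((tendsto_scale_div_rpow (by linarith) ha).inv₀ hΓ).pow 2).isBigO_one ℝ).mul
    (Asymptotics.isBigO_refl (fun n : ℕ => ((n : ℝ) ^ (4 * p - 2))⁻¹) atTop)
  refine summable_of_isBigO_nat' (Real.summable_nat_rpow_inv.2 (by linarith : (1 : ℝ) < 4 * p - 2))
    (hO.congr' ?_ (by simp))
  filter_upwards [eventually_ge_atTop 1] with n hn
  have hn0 : (0 : ℝ) < n := by exact_mod_cast hn
  have hsq : (n : ℝ) ^ (4 * p - 2) = ((n : ℝ) ^ (2 * p - 1)) ^ 2 := by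
    rw [← Real.rpow_mul_natCast hn0.le]
    ring_nf
  have := (scale_pos (by linarith) ha hn).ne'
  have := (Real.rpow_pos_of_pos hn0 (2 * p - 1)).ne'
  rw [hsq]
  field_simp

variable {Ω : Type*} {m0 : MeasurableSpace Ω} {μ : Measure Ω} {σ : ℕ → Ω → ℝ}
  {F : ℕ → MeasurableSpace Ω} {S : ℕ → Ω → ℝ}

def HasMemoryStep (μ : Measure Ω) (σ : ℕ → Ω → ℝ) (F : ℕ → MeasurableSpace Ω) (p : ℝ) : Prop :=
  ∀ n ≥ 1, ∀ s : ℝ, (s = 1 ∨ s = -1) →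
    μ[(fun ω => if σ (n + 1) ω = s then (1 : ℝ) else 0)|F n]
      =ᵐ[μ] fun ω => (n : ℝ)⁻¹ * ∑ k ∈ Finset.Icc 1 n,
        (p * (if σ k ω = s then (1 : ℝ) else 0) + (1 - p) * (if σ k ω = -s then (1 : ℝ) else 0))

lemma condExp_succ_ae_eq [IsFiniteMeasure μ] (hσmeas : ∀ k, Measurable (σ k))
    (hval : ∀ k ≥ 1, ∀ᵐ ω ∂μ, σ k ω = 1 ∨ σ k ω = -1)
    (hS : ∀ n ω, S n ω = ∑ k ∈ Finset.Icc 1 n, σ k ω) (hmodel : HasMemoryStep μ σ F p)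
    {n : ℕ} (hn : 1 ≤ n) :
    μ[σ (n + 1)|F n] =ᵐ[μ] fun ω => (2 * p - 1) / n * S n ω := by
  set ind : ℝ → Ω → ℝ := fun s ω => if σ (n + 1) ω = s then 1 else 0
  have hind : ∀ s, Integrable (ind s) μ := fun s =>
    Integrable.of_bound (Measurable.ite (hσmeas (n + 1) (measurableSet_singleton s))
      measurable_const measurable_const).aestronglyMeasurable 1
      (ae_of_all _ fun ω => by simp only [ind]; split_ifs <;> simp)
  have hsplit : σ (n + 1) =ᵐ[μ] ind 1 - ind (-1) := by
    filter_upwards [hval (n + 1) (by omega)] with ω hω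
    rcases hω with hω | hω <;> norm_num [ind, hω]
  have hpast : ∀ᵐ ω ∂μ, ∀ k ∈ Finset.Icc 1 n, σ k ω = 1 ∨ σ k ω = -1 :=
    (eventually_all_finset _).2 fun k hk => hval k (Finset.mem_Icc.1 hk).1
  calc μ[σ (n + 1)|F n] =ᵐ[μ] μ[ind 1 - ind (-1)|F n] := condExp_congr_ae hsplit
    _ =ᵐ[μ] μ[ind 1|F n] - μ[ind (-1)|F n] := condExp_sub (hind 1) (hind (-1)) _
    _ =ᵐ[μ] fun ω => (2 * p - 1) / n * S n ω := by
      filter_upwards [hmodel n hn 1 (Or.inl rfl), hmodel n hn (-1) (Or.inr rfl), hpast]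
        with ω h1 h2 hω
      rw [Pi.sub_apply, h1, h2, hS, ← mul_sub, ← Finset.sum_sub_distrib, div_eq_inv_mul,
        mul_assoc]
      congr 1
      rw [Finset.mul_sum]
      refine Finset.sum_congr rfl fun k hk => ?_
      rcases hω k hk with h | h <;> norm_num [h] <;> ring

/-- At time `n` the steps `σ 1, …, σ (n + 1)` are known. The shift is needed because the first
step `σ 1` does not follow the memory rule, so `S n / a n` is a martingale only from `n = 1`. -/
def succFiltration (σ : ℕ → Ω → ℝ) (hσ : ∀ k, Measurable (σ k)) : Filtration ℕ m0 where
  seq n := ⨆ k ∈ Set.Icc 1 (n + 1), MeasurableSpace.comap (σ k) inferInstance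
  mono' _ _ hij := biSup_mono fun _ hk => ⟨hk.1, hk.2.trans (by omega)⟩
  le' _ := iSup₂_le fun k _ => (hσ k).comap_le

lemma stronglyAdapted_succFiltration (hσmeas : ∀ k, Measurable (σ k))
    (hS : ∀ n ω, S n ω = ∑ k ∈ Finset.Icc 1 n, σ k ω) :
    StronglyAdapted (succFiltration σ hσmeas) fun n ω => S (n + 1) ω / a (n + 1) := fun n => by
  refine (Measurable.div_const ?_ _).stronglyMeasurable
  rw [show S (n + 1) = fun ω => ∑ k ∈ Finset.Icc 1 (n + 1), σ k ω from funext (hS _)]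
  exact Finset.measurable_sum _ fun k hk => measurable_iff_comap_le.2 <| le_iSup₂
    (f := fun k (_ : k ∈ Set.Icc 1 (n + 1)) => MeasurableSpace.comap (σ k) inferInstance) k
    (Finset.mem_Icc.1 hk)

lemma memLp_partialSum [IsFiniteMeasure μ] (hσmeas : ∀ k, Measurable (σ k))
    (hval : ∀ k ≥ 1, ∀ᵐ ω ∂μ, σ k ω = 1 ∨ σ k ω = -1)
    (hS : ∀ n ω, S n ω = ∑ k ∈ Finset.Icc 1 n, σ k ω) (n : ℕ) : MemLp (S n) 2 μ := by
  rw [show S n = ∑ k ∈ Finset.Icc 1 n, σ k from funext fun ω => by simp [hS]]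
  exact memLp_finsetSum' _ fun k hk =>
    memLp_of_ae_eq_one_or_neg_one (hσmeas k) (hval k (Finset.mem_Icc.1 hk).1)

lemma sub_ae_eq_smul_sub_condExp [IsFiniteMeasure μ] (hp : 0 < p)
    (hσmeas : ∀ k, Measurable (σ k)) (hval : ∀ k ≥ 1, ∀ᵐ ω ∂μ, σ k ω = 1 ∨ σ k ω = -1)
    (hF : ∀ n, F n = ⨆ k ∈ Set.Icc 1 n, MeasurableSpace.comap (σ k) inferInstance)
    (hS : ∀ n ω, S n ω = ∑ k ∈ Finset.Icc 1 n, σ k ω) (hmodel : HasMemoryStep μ σ F p)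
    (ha : ∀ n : ℕ, 1 ≤ n → a n = scale p n) (n : ℕ) :
    (fun ω => S (n + 2) ω / a (n + 2)) - (fun ω => S (n + 1) ω / a (n + 1))
      =ᵐ[μ] (a (n + 2))⁻¹ • (σ (n + 2) - μ[σ (n + 2)|succFiltration σ hσmeas n]) := by
  have hdrift := condExp_succ_ae_eq hσmeas hval hS hmodel (Nat.le_add_left 1 n)
  rw [hF] at hdrift
  filter_upwards [hdrift] with ω hω
  have hn : (0 : ℝ) < n + 1 := n.cast_add_one_pos
  have := (scale_pos hp ha (Nat.le_add_left 1 n)).ne'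
  have : (n : ℝ) + 1 + (2 * p - 1) ≠ 0 := by linarith
  simp only [Pi.sub_apply, Pi.smul_apply, smul_eq_mul, succFiltration] at hω ⊢
  rw [hω, hS (n + 2), Finset.sum_Icc_succ_top (by omega), ← hS (n + 1),
    scale_succ hp ha (Nat.le_add_left 1 n)]
  push_cast
  field_simp
  ring

lemma martingale_normalized [IsFiniteMeasure μ] (hp : 0 < p)
    (hσmeas : ∀ k, Measurable (σ k)) (hval : ∀ k ≥ 1, ∀ᵐ ω ∂μ, σ k ω = 1 ∨ σ k ω = -1)
    (hF : ∀ n, F n = ⨆ k ∈ Set.Icc 1 n, MeasurableSpace.comap (σ k) inferInstance)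
    (hS : ∀ n ω, S n ω = ∑ k ∈ Finset.Icc 1 n, σ k ω) (hmodel : HasMemoryStep μ σ F p)
    (ha : ∀ n : ℕ, 1 ≤ n → a n = scale p n) :
    Martingale (fun n ω => S (n + 1) ω / a (n + 1)) (succFiltration σ hσmeas) μ :=
  martingale_of_sub_ae_eq_smul_sub_condExp (stronglyAdapted_succFiltration hσmeas hS)
    (fun n => ((memLp_partialSum hσmeas hval hS (n + 1)).mul_const _).integrable one_le_two)
    (fun n => (memLp_of_ae_eq_one_or_neg_one (hσmeas _) (hval (n + 2) (by omega))).integrable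
      le_rfl)
    (sub_ae_eq_smul_sub_condExp hp hσmeas hval hF hS hmodel ha)

lemma summable_integral_sq_increment [IsProbabilityMeasure μ] (hp : 3 / 4 < p)
    (hσmeas : ∀ k, Measurable (σ k)) (hval : ∀ k ≥ 1, ∀ᵐ ω ∂μ, σ k ω = 1 ∨ σ k ω = -1)
    (hF : ∀ n, F n = ⨆ k ∈ Set.Icc 1 n, MeasurableSpace.comap (σ k) inferInstance)
    (hS : ∀ n ω, S n ω = ∑ k ∈ Finset.Icc 1 n, σ k ω) (hmodel : HasMemoryStep μ σ F p)
    (ha : ∀ n : ℕ, 1 ≤ n → a n = scale p n) :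
    Summable fun n => ∫ ω, (S (n + 2) ω / a (n + 2) - S (n + 1) ω / a (n + 1)) ^ 2 ∂μ := by
  refine Summable.of_nonneg_of_le (fun n => integral_nonneg fun ω => sq_nonneg _) (fun n => ?_)
    ((summable_nat_add_iff 2).2 (summable_inv_scale_sq hp ha))
  have hσ : ∀ᵐ ω ∂μ, σ (n + 2) ω = 1 ∨ σ (n + 2) ω = -1 := hval (n + 2) (by omega)
  simpa [integral_sq_eq_one_of_ae_eq_one_or_neg_one hσ] using
    integral_sq_le_of_ae_eq_smul_sub_condExp ((succFiltration σ hσmeas).le n)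
      (memLp_of_ae_eq_one_or_neg_one (hσmeas _) hσ)
      (sub_ae_eq_smul_sub_condExp (by linarith) hσmeas hval hF hS hmodel ha n)

end ElephantRandomWalk

open ElephantRandomWalk in
theorem erw_martingale_L2_bounded_general
    {Ω : Type*} {m0 : MeasurableSpace Ω} (μ : Measure Ω) [IsProbabilityMeasure μ]
    (p : ℝ)
    (σ : ℕ → Ω → ℝ) (hσmeas : ∀ k, Measurable (σ k))
    (hval : ∀ k ≥ 1, ∀ᵐ ω ∂μ, σ k ω = 1 ∨ σ k ω = -1)
    (F : ℕ → MeasurableSpace Ω)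
    (hF : ∀ n, F n = ⨆ k ∈ Set.Icc 1 n, MeasurableSpace.comap (σ k) inferInstance)
    (S : ℕ → Ω → ℝ) (hS : ∀ n ω, S n ω = ∑ k ∈ Finset.Icc 1 n, σ k ω)
    (hmodel : ∀ n ≥ 1, ∀ s : ℝ, (s = 1 ∨ s = -1) →
      μ[(fun ω => if σ (n+1) ω = s then (1:ℝ) else 0) | F n]
        =ᵐ[μ] fun ω => (n : ℝ)⁻¹ * ∑ k ∈ Finset.Icc 1 n,
          (p * (if σ k ω = s then (1:ℝ) else 0)
            + (1 - p) * (if σ k ω = -s then (1:ℝ) else 0)))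
    (hp' : p ∈ Set.Ioo (3/4 : ℝ) 1)
    (a : ℕ → ℝ)
    (ha : ∀ n : ℕ, 1 ≤ n →
      a n = Real.Gamma ((n : ℝ) + 2 * p - 1) / (Real.Gamma (2 * p) * Real.Gamma (n : ℝ))) :
    (∃ C : ℝ, ∀ n : ℕ, 1 ≤ n → ∫ ω, (S n ω / a n) ^ 2 ∂μ ≤ C) ∧
    (∃ Y : Ω → ℝ,
      (∀ᵐ ω ∂μ, Tendsto (fun n : ℕ => S n ω / a n) atTop (nhds (Y ω))) ∧
      Tendsto (fun n : ℕ => ∫ ω, (S n ω / a n - Y ω) ^ 2 ∂μ) atTop (nhds 0)) ∧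
    (∀ᵐ ω ∂μ, ∃ l : ℝ,
      Tendsto (fun n : ℕ => S n ω / (n : ℝ) ^ (2 * p - 1)) atTop (nhds l)) := by
  have hp : 0 < p := by linarith [hp'.1]
  have hM := martingale_normalized hp hσmeas hval hF hS hmodel ha
  obtain ⟨⟨C, hC⟩, Y, hae, hL2⟩ := hM.exists_ae_tendsto_of_summable_integral_sq_sub
    (fun n => (memLp_partialSum hσmeas hval hS (n + 1)).mul_const _)
    (summable_integral_sq_increment hp'.1 hσmeas hval hF hS hmodel ha)
  have hae' : ∀ᵐ ω ∂μ, Tendsto (fun n => S n ω / a n) atTop (𝓝 (Y ω)) := by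
    filter_upwards [hae] with ω hω using (tendsto_add_atTop_iff_nat 1).1 hω
  refine ⟨⟨C, fun n hn => ?_⟩, ⟨Y, hae', (tendsto_add_atTop_iff_nat 1).1 hL2⟩, ?_⟩
  · obtain ⟨k, rfl⟩ := Nat.exists_eq_add_of_le' hn
    exact hC k
  · filter_upwards [hae'] with ω hω
    refine ⟨Y ω * (Real.Gamma (2 * p))⁻¹,
      (hω.mul (tendsto_scale_div_rpow (by linarith [hp'.1]) ha)).congr' ?_⟩
    filter_upwards [eventually_ge_atTop 1] with n hn
    have := (scale_pos hp ha hn).ne'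
    field_simp

/-- For `3/4 < p < 1`, the martingale `M_n = S_n / a_n` is bounded in `L^2`;
consequently it converges a.s. and in `L^2` to a limit `Y`, and `S_n / n^{2p-1}`
converges almost surely. -/
theorem erw_martingale_L2_bounded
    {Ω : Type*} {m0 : MeasurableSpace Ω} (μ : Measure Ω) [IsProbabilityMeasure μ]
    (p q : ℝ) (hp : p ∈ Set.Icc (0:ℝ) 1) (hq : q ∈ Set.Icc (0:ℝ) 1)
    (σ : ℕ → Ω → ℝ) (hσmeas : ∀ k, Measurable (σ k))
    (hval : ∀ k ≥ 1, ∀ᵐ ω ∂μ, σ k ω = 1 ∨ σ k ω = -1)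
    (hq1 : μ {ω | σ 1 ω = 1} = ENNReal.ofReal q)
    (F : ℕ → MeasurableSpace Ω)
    (hF : ∀ n, F n = ⨆ k ∈ Set.Icc 1 n, MeasurableSpace.comap (σ k) inferInstance)
    (S : ℕ → Ω → ℝ) (hS : ∀ n ω, S n ω = ∑ k ∈ Finset.Icc 1 n, σ k ω)
    (hmodel : ∀ n ≥ 1, ∀ s : ℝ, (s = 1 ∨ s = -1) →
      μ[(fun ω => if σ (n+1) ω = s then (1:ℝ) else 0) | F n]
        =ᵐ[μ] fun ω => (n : ℝ)⁻¹ * ∑ k ∈ Finset.Icc 1 n,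
          (p * (if σ k ω = s then (1:ℝ) else 0)
            + (1 - p) * (if σ k ω = -s then (1:ℝ) else 0)))
    (hp' : p ∈ Set.Ioo (3/4 : ℝ) 1)
    (a : ℕ → ℝ)
    (ha : ∀ n : ℕ, 1 ≤ n →
      a n = Real.Gamma ((n : ℝ) + 2 * p - 1) / (Real.Gamma (2 * p) * Real.Gamma (n : ℝ))) :
    (∃ C : ℝ, ∀ n : ℕ, 1 ≤ n → ∫ ω, (S n ω / a n) ^ 2 ∂μ ≤ C) ∧
    (∃ Y : Ω → ℝ,
      (∀ᵐ ω ∂μ, Tendsto (fun n : ℕ => S n ω / a n) atTop (nhds (Y ω))) ∧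
      Tendsto (fun n : ℕ => ∫ ω, (S n ω / a n - Y ω) ^ 2 ∂μ) atTop (nhds 0)) ∧
    (∀ᵐ ω ∂μ, ∃ l : ℝ,
      Tendsto (fun n : ℕ => S n ω / (n : ℝ) ^ (2 * p - 1)) atTop (nhds l)) :=
  erw_martingale_L2_bounded_general (m0 := m0) μ p σ hσmeas hval F hF S hS hmodel hp' a ha
end

section
/- For the elephant random walk with 3/4 < p < 1 and deterministic first step σ_1 = +1, the almost-sure limit Y of S_n/n^{2p−1} satisfies E[Y] = 1/Γ(2p) and E[Y^2] = 1/((4p−3)·Γ(4p−2)). -/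
/-!
Conditioning on the past gives `E[σ_{n+1} | F_n] = (2p - 1) S_n / n`. Since `σ_{n+1}² = 1` and
`S_n` is `F_n`-measurable, the first two moments of the walk satisfy
`E S_{n+1} = (1 + (2p - 1)/n) E S_n` and `E S_{n+1}² = (1 + (4p - 2)/n) E S_n² + 1`.
Both recursions are solved by the products `∏_{k<n} (1 + c/(k+1))`, which Euler's limit formula
`GammaSeq c n → Γ(c)` turns into `E S_n ~ n^{2p-1}/Γ(2p)` and, as `4p - 2 > 1`,
`E S_n² ~ n^{4p-2}/((4p - 3) Γ(4p - 2))`. By Fatou `Y` is square integrable, and `L²` convergence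
of `S_n / n^{2p-1}` to `Y` carries the normalized first and second moments over to `Y`.
-/

open MeasureTheory Filter Finset Real Topology
open scoped Nat

lemma prod_range_one_add_div_div_rpow (c : ℝ) (hc : 0 < c) {n : ℕ} (hn : n ≠ 0) :
    (∏ k ∈ range n, (1 + c / (k + 1))) / (n : ℝ) ^ c = 1 / (c * GammaSeq c n) := by
  have hfac : (∏ k ∈ range n, ((k : ℝ) + 1)) = n ! := by
    exact_mod_cast prod_range_add_one_eq_factorial n
  have hprod : ∏ k ∈ range n, (1 + c / (k + 1)) = (∏ k ∈ range n, (c + (k + 1))) / n ! := by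
    rw [← hfac, ← prod_div_distrib]
    exact prod_congr rfl fun k _ => by field_simp; ring
  have hpos : ∀ k ∈ range n, 0 < c + ((k : ℝ) + 1) := fun k _ => by positivity
  have : (0 : ℝ) < (n : ℝ) ^ c := by positivity
  have := (prod_pos hpos).ne'
  have : (n ! : ℝ) ≠ 0 := by positivity
  rw [GammaSeq, prod_range_succ', hprod]
  push_cast
  field_simp
  ring

lemma tendsto_prod_range_one_add_div_div_rpow (c : ℝ) (hc : 0 < c) :
    Tendsto (fun n : ℕ => (∏ k ∈ range n, (1 + c / (k + 1))) / (n : ℝ) ^ c) atTop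
      (𝓝 (1 / Gamma (c + 1))) := by
  rw [Gamma_add_one hc.ne']
  refine (tendsto_const_nhds.div (tendsto_const_nhds.mul (GammaSeq_tendsto_Gamma c))
    (by have := Gamma_pos_of_pos hc; positivity)).congr' ?_
  filter_upwards [eventually_ne_atTop 0] with n hn
  exact (prod_range_one_add_div_div_rpow c hc hn).symm

lemma eq_prod_of_eq_one_add_div_mul {c : ℝ} {x : ℕ → ℝ} (h1 : x 1 = 1)
    (hrec : ∀ n ≥ 1, x (n + 1) = (1 + c / n) * x n) (n : ℕ) :
    x (n + 1) = ∏ k ∈ range n, (1 + c / (k + 1)) := by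
  induction n with
  | zero => simpa using h1
  | succ n ih =>
    rw [hrec (n + 1) (by omega), ih, prod_range_succ, mul_comm]
    push_cast
    rfl

lemma tendsto_div_rpow_of_eq_one_add_div_mul {c : ℝ} (hc : 0 < c) {x : ℕ → ℝ} (h1 : x 1 = 1)
    (hrec : ∀ n ≥ 1, x (n + 1) = (1 + c / n) * x n) :
    Tendsto (fun n : ℕ => x n / (n : ℝ) ^ c) atTop (𝓝 (1 / Gamma (c + 1))) := by
  have hlast : Tendsto (fun n : ℕ => 1 + c / ((n : ℝ) + 1)) atTop (𝓝 1) := by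
    simpa [div_eq_mul_one_div c] using
      tendsto_const_nhds.add (tendsto_one_div_add_atTop_nhds_zero_nat.const_mul c)
  have hprod := (tendsto_add_atTop_iff_nat 1).2 (tendsto_prod_range_one_add_div_div_rpow c hc)
  rw [← tendsto_add_atTop_iff_nat 1, ← div_one (1 / Gamma (c + 1))]
  refine (hprod.div hlast one_ne_zero).congr fun n => ?_
  have : 1 + c / ((n : ℝ) + 1) ≠ 0 := by positivity
  simp only [Pi.div_apply, eq_prod_of_eq_one_add_div_mul h1 hrec, prod_range_succ]
  push_cast
  field_simp

lemma tendsto_div_rpow_of_eq_one_add_div_mul_add_one {b : ℝ} (hb : 1 < b) {y : ℕ → ℝ}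
    (h1 : y 1 = 1) (hrec : ∀ n ≥ 1, y (n + 1) = (1 + b / n) * y n + 1) :
    Tendsto (fun n : ℕ => y n / (n : ℝ) ^ b) atTop (𝓝 (1 / ((b - 1) * Gamma b))) := by
  have hb0 : 0 < b := by linarith
  have hb1 : b - 1 ≠ 0 := by linarith
  set z : ℕ → ℝ := fun n => ((b - 1) * y n + n) / b with hz
  have hzrec : ∀ n ≥ 1, z (n + 1) = (1 + b / n) * z n := by
    intro n hn
    have : (n : ℝ) ≠ 0 := by positivity
    simp only [hz, hrec n hn]
    push_cast
    field_simp
    ring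
  have hz1 : z 1 = 1 := by simp [hz, h1, hb0.ne']
  have hpow : Tendsto (fun n : ℕ => (n : ℝ) ^ (1 - b)) atTop (𝓝 0) := by
    simpa [neg_sub, Function.comp_def] using
      (tendsto_rpow_neg_atTop (by linarith : 0 < b - 1)).comp tendsto_natCast_atTop_atTop
  have hlim := ((tendsto_div_rpow_of_eq_one_add_div_mul hb0 hz1 hzrec).const_mul b).sub hpow
    |>.div_const (b - 1)
  rw [Gamma_add_one hb0.ne'] at hlim
  have hval : (b * (1 / (b * Gamma b)) - 0) / (b - 1) = 1 / ((b - 1) * Gamma b) := by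
    have := (Gamma_pos_of_pos hb0).ne'
    field_simp
    ring
  rw [hval] at hlim
  refine hlim.congr' ?_
  filter_upwards [eventually_ne_atTop 0] with n hn
  have hn' : (0 : ℝ) < n := by positivity
  rw [rpow_sub hn', rpow_one]
  simp only [hz]
  field_simp
  ring

section L2

variable {Ω : Type*} {m0 : MeasurableSpace Ω} {μ : Measure Ω}

lemma abs_integral_mul_le_sqrt_mul_sqrt {f g : Ω → ℝ} (hf : MemLp f 2 μ) (hg : MemLp g 2 μ) :
    |∫ ω, f ω * g ω ∂μ| ≤ √(∫ ω, f ω ^ 2 ∂μ) * √(∫ ω, g ω ^ 2 ∂μ) := by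
  have h2 : ENNReal.ofReal 2 = 2 := by norm_num
  have hholder := integral_mul_le_Lp_mul_Lq_of_nonneg Real.HolderConjugate.two_two
    (ae_of_all μ fun ω => abs_nonneg (f ω)) (ae_of_all μ fun ω => abs_nonneg (g ω))
    (h2 ▸ hf.abs) (h2 ▸ hg.abs)
  simp only [rpow_two, sq_abs, ← sqrt_eq_rpow] at hholder
  refine (abs_integral_le_integral_abs).trans ?_
  simpa only [abs_mul] using hholder

lemma integrable_of_tendsto_ae_of_tendsto_integral {f : ℕ → Ω → ℝ} {g : Ω → ℝ} {c : ℝ}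
    (hf : ∀ n, Integrable (f n) μ) (hf_nonneg : ∀ n, 0 ≤ᵐ[μ] f n)
    (hfg : ∀ᵐ ω ∂μ, Tendsto (fun n => f n ω) atTop (𝓝 (g ω)))
    (hc : Tendsto (fun n => ∫ ω, f n ω ∂μ) atTop (𝓝 c)) :
    Integrable g μ := by
  refine ⟨aestronglyMeasurable_of_tendsto_ae _ (fun n => (hf n).1) hfg, ?_⟩
  have hlintegral : ∀ n, ∫⁻ ω, ‖f n ω‖ₑ ∂μ = ENNReal.ofReal (∫ ω, f n ω ∂μ) := fun n => by
    rw [ofReal_integral_eq_lintegral_ofReal (hf n) (hf_nonneg n)]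
    refine lintegral_congr_ae ((hf_nonneg n).mono fun ω h => ?_)
    exact Real.enorm_of_nonneg h
  calc ∫⁻ ω, ‖g ω‖ₑ ∂μ = ∫⁻ ω, liminf (fun n => ‖f n ω‖ₑ) atTop ∂μ :=
        lintegral_congr_ae (hfg.mono fun ω h => h.enorm.liminf_eq.symm)
    _ ≤ liminf (fun n => ∫⁻ ω, ‖f n ω‖ₑ ∂μ) atTop :=
        lintegral_liminf_le' fun n => (hf n).1.enorm
    _ = ENNReal.ofReal c := by
        simp only [hlintegral]
        exact ((ENNReal.continuous_ofReal.tendsto c).comp hc).liminf_eq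
    _ < ⊤ := ENNReal.ofReal_lt_top

lemma memLp_two_of_tendsto_ae_of_tendsto_integral_sq {X : ℕ → Ω → ℝ} {Y : Ω → ℝ} {c : ℝ}
    (hX : ∀ n, MemLp (X n) 2 μ) (hXY : ∀ᵐ ω ∂μ, Tendsto (fun n => X n ω) atTop (𝓝 (Y ω)))
    (hc : Tendsto (fun n => ∫ ω, X n ω ^ 2 ∂μ) atTop (𝓝 c)) :
    MemLp Y 2 μ :=
  (memLp_two_iff_integrable_sq
    (aestronglyMeasurable_of_tendsto_ae _ (fun n => (hX n).1) hXY)).2 <|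
    integrable_of_tendsto_ae_of_tendsto_integral (fun n => (hX n).integrable_sq)
      (fun _ => ae_of_all μ fun _ => sq_nonneg _) (hXY.mono fun _ h => h.pow 2) hc

lemma tendsto_integral_of_tendsto_integral_sub_sq [IsFiniteMeasure μ] {X : ℕ → Ω → ℝ}
    {Y : Ω → ℝ} (hX : ∀ n, MemLp (X n) 2 μ) (hY : MemLp Y 2 μ)
    (h : Tendsto (fun n => ∫ ω, (X n ω - Y ω) ^ 2 ∂μ) atTop (𝓝 0)) :
    Tendsto (fun n => ∫ ω, X n ω ∂μ) atTop (𝓝 (∫ ω, Y ω ∂μ)) := by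
  rw [tendsto_iff_norm_sub_tendsto_zero]
  have hbound : ∀ n, ‖∫ ω, X n ω ∂μ - ∫ ω, Y ω ∂μ‖
      ≤ √(∫ ω, (X n ω - Y ω) ^ 2 ∂μ) * √(∫ _ω, (1 : ℝ) ^ 2 ∂μ) := fun n => by
    have := abs_integral_mul_le_sqrt_mul_sqrt ((hX n).sub hY) (memLp_const (1 : ℝ))
    simp only [mul_one, Pi.sub_apply] at this
    rwa [integral_sub ((hX n).integrable one_le_two) (hY.integrable one_le_two)] at this
  refine squeeze_zero (fun n => norm_nonneg _) hbound ?_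
  simpa using ((continuous_sqrt.tendsto 0).comp h).mul_const _

lemma tendsto_integral_sq_of_tendsto_integral_sub_sq {X : ℕ → Ω → ℝ} {Y : Ω → ℝ}
    (hX : ∀ n, MemLp (X n) 2 μ) (hY : MemLp Y 2 μ)
    (h : Tendsto (fun n => ∫ ω, (X n ω - Y ω) ^ 2 ∂μ) atTop (𝓝 0)) :
    Tendsto (fun n => ∫ ω, X n ω ^ 2 ∂μ) atTop (𝓝 (∫ ω, Y ω ^ 2 ∂μ)) := by
  rw [tendsto_iff_norm_sub_tendsto_zero]
  have hsplit : ∀ n, ∫ ω, X n ω ^ 2 ∂μ - ∫ ω, Y ω ^ 2 ∂μ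
      = ∫ ω, (X n ω - Y ω) ^ 2 ∂μ + 2 * ∫ ω, (X n ω - Y ω) * Y ω ∂μ := fun n => by
    have hZ := (hX n).sub hY
    have hZ2 : Integrable (fun ω => (X n ω - Y ω) ^ 2) μ := hZ.integrable_sq
    have hZY : Integrable (fun ω => 2 * ((X n ω - Y ω) * Y ω)) μ :=
      (hZ.integrable_mul hY).const_mul 2
    rw [← integral_const_mul, ← integral_add hZ2 hZY,
      ← integral_sub (hX n).integrable_sq hY.integrable_sq]
    exact integral_congr_ae (ae_of_all μ fun ω => by ring)
  have hbound : ∀ n, ‖∫ ω, X n ω ^ 2 ∂μ - ∫ ω, Y ω ^ 2 ∂μ‖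
      ≤ ∫ ω, (X n ω - Y ω) ^ 2 ∂μ + 2 * (√(∫ ω, (X n ω - Y ω) ^ 2 ∂μ) * √(∫ ω, Y ω ^ 2 ∂μ)) :=
    fun n => by
    rw [hsplit, Real.norm_eq_abs]
    refine (abs_add_le _ _).trans (add_le_add (abs_of_nonneg ?_).le ?_)
    · exact integral_nonneg fun ω => sq_nonneg _
    · rw [abs_mul, abs_two]
      exact mul_le_mul_of_nonneg_left
        (abs_integral_mul_le_sqrt_mul_sqrt ((hX n).sub hY) hY) two_pos.le
  refine squeeze_zero (fun n => norm_nonneg _) hbound ?_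
  simpa using h.add ((((continuous_sqrt.tendsto 0).comp h).mul_const _).const_mul 2)

end L2

section StepRecursion

variable {Ω : Type*} {m m0 : MeasurableSpace Ω} {μ : Measure Ω} {X ξ : Ω → ℝ} {c : ℝ}

lemma integral_add_of_condExp_eq_const_mul [IsFiniteMeasure μ] (hm : m ≤ m0) (hX : Integrable X μ)
    (hξ : Integrable ξ μ) (hcond : μ[ξ | m] =ᵐ[μ] fun ω => c * X ω) :
    ∫ ω, (X ω + ξ ω) ∂μ = (1 + c) * ∫ ω, X ω ∂μ := by
  have hξint : ∫ ω, ξ ω ∂μ = c * ∫ ω, X ω ∂μ := by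
    rw [← integral_condExp hm, integral_congr_ae hcond, integral_const_mul]
  rw [integral_add hX hξ, hξint]
  ring

lemma integral_add_sq_of_condExp_eq_const_mul [IsProbabilityMeasure μ] (hm : m ≤ m0)
    (hXm : StronglyMeasurable[m] X) (hX : MemLp X 2 μ) (hξm : AEStronglyMeasurable ξ μ)
    (hξ : ∀ᵐ ω ∂μ, |ξ ω| = 1)
    (hcond : μ[ξ | m] =ᵐ[μ] fun ω => c * X ω) :
    ∫ ω, (X ω + ξ ω) ^ 2 ∂μ = (1 + 2 * c) * ∫ ω, X ω ^ 2 ∂μ + 1 := by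
  have hξtop : MemLp ξ ⊤ μ := memLp_top_of_bound hξm 1 (hξ.mono fun ω h => h.le)
  have hXξ : Integrable (X * ξ) μ := (hX.integrable one_le_two).mul_of_top_left hξtop
  have hcross : ∫ ω, X ω * ξ ω ∂μ = c * ∫ ω, X ω ^ 2 ∂μ := by
    have hpull := condExp_mul_of_stronglyMeasurable_left hXm hXξ (hξtop.integrable le_top)
    rw [← integral_const_mul, ← integral_condExp hm]
    refine integral_congr_ae (hpull.trans (hcond.mono fun ω h => ?_))
    simp only [Pi.mul_apply, h]
    ring
  have hsq : (fun ω => (X ω + ξ ω) ^ 2) =ᵐ[μ] fun ω => (X ω ^ 2 + 2 * (X ω * ξ ω)) + 1 := by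
    filter_upwards [hξ] with ω h
    have : ξ ω ^ 2 = 1 := by rw [← sq_abs, h, one_pow]
    linear_combination this
  have hX2 : Integrable (fun ω => X ω ^ 2) μ := hX.integrable_sq
  have hXξ2 : Integrable (fun ω => 2 * (X ω * ξ ω)) μ := hXξ.const_mul 2
  have hsum : Integrable (fun ω => X ω ^ 2 + 2 * (X ω * ξ ω)) μ := hX2.add hXξ2
  rw [integral_congr_ae hsq, integral_add hsum (integrable_const 1),
    integral_add hX2 hXξ2, integral_const_mul, hcross, integral_const, probReal_univ, one_smul]
  ring

end StepRecursion

structure IsElephantRandomWalk {Ω : Type*} {m0 : MeasurableSpace Ω} (μ : Measure Ω) (p : ℝ)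
    (σ : ℕ → Ω → ℝ) (F : ℕ → MeasurableSpace Ω) (S : ℕ → Ω → ℝ) : Prop where
  measurable_step : ∀ k, Measurable (σ k)
  step_eq_one_or_neg_one : ∀ k ≥ 1, ∀ᵐ ω ∂μ, σ k ω = 1 ∨ σ k ω = -1
  filtration_eq : ∀ n, F n = ⨆ k ∈ Set.Icc 1 n, MeasurableSpace.comap (σ k) inferInstance
  walk_eq_sum : ∀ n ω, S n ω = ∑ k ∈ Finset.Icc 1 n, σ k ω
  condExp_step_indicator : ∀ n ≥ 1, ∀ s : ℝ, (s = 1 ∨ s = -1) →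
    μ[(fun ω => if σ (n+1) ω = s then (1:ℝ) else 0) | F n]
      =ᵐ[μ] fun ω => (n : ℝ)⁻¹ * ∑ k ∈ Finset.Icc 1 n,
        (p * (if σ k ω = s then (1:ℝ) else 0)
          + (1 - p) * (if σ k ω = -s then (1:ℝ) else 0))

namespace IsElephantRandomWalk

variable {Ω : Type*} {m0 : MeasurableSpace Ω} {μ : Measure Ω} {p : ℝ} {σ : ℕ → Ω → ℝ}
  {F : ℕ → MeasurableSpace Ω} {S : ℕ → Ω → ℝ}

lemma ae_forall_step_eq_one_or_neg_one (h : IsElephantRandomWalk μ p σ F S) (n : ℕ) :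
    ∀ᵐ ω ∂μ, ∀ k ∈ Finset.Icc 1 n, σ k ω = 1 ∨ σ k ω = -1 :=
  (eventually_all_finset _).2 fun k hk => h.step_eq_one_or_neg_one k (mem_Icc.1 hk).1

lemma abs_step_eq_one (h : IsElephantRandomWalk μ p σ F S) {k : ℕ} (hk : 1 ≤ k) :
    ∀ᵐ ω ∂μ, |σ k ω| = 1 :=
  (h.step_eq_one_or_neg_one k hk).mono fun ω hω => by rcases hω with hω | hω <;> simp [hω]

lemma memLp_step (h : IsElephantRandomWalk μ p σ F S) {k : ℕ} (hk : 1 ≤ k) :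
    MemLp (σ k) ⊤ μ :=
  memLp_top_of_bound (h.measurable_step k).aestronglyMeasurable 1
    ((h.abs_step_eq_one hk).mono fun _ hω => hω.le)

lemma walk_succ (h : IsElephantRandomWalk μ p σ F S) (n : ℕ) (ω : Ω) :
    S (n + 1) ω = S n ω + σ (n + 1) ω := by
  rw [h.walk_eq_sum, h.walk_eq_sum, sum_Icc_succ_top (by omega)]

lemma filtration_le (h : IsElephantRandomWalk μ p σ F S) (n : ℕ) : F n ≤ m0 := by
  rw [h.filtration_eq n]
  exact iSup₂_le fun k _ => (h.measurable_step k).comap_le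

lemma stronglyMeasurable_walk (h : IsElephantRandomWalk μ p σ F S) (n : ℕ) :
    StronglyMeasurable[F n] (S n) := by
  have hσ : ∀ k ∈ Finset.Icc 1 n, Measurable[F n] (σ k) := fun k hk => by
    rw [h.filtration_eq n, measurable_iff_comap_le]
    exact le_iSup₂ (f := fun k (_ : k ∈ Set.Icc 1 n) =>
      MeasurableSpace.comap (σ k) inferInstance) k (by simpa using hk)
  rw [show S n = fun ω => ∑ k ∈ Finset.Icc 1 n, σ k ω from funext (h.walk_eq_sum n)]
  exact (Finset.measurable_sum _ hσ).stronglyMeasurable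

lemma memLp_walk (h : IsElephantRandomWalk μ p σ F S) (n : ℕ) : MemLp (S n) ⊤ μ := by
  have hmeas := (h.stronglyMeasurable_walk n).mono (h.filtration_le n)
  refine memLp_top_of_bound hmeas.aestronglyMeasurable n ((h.ae_forall_step_eq_one_or_neg_one n).mono fun ω hω => ?_)
  rw [h.walk_eq_sum]
  refine (norm_sum_le _ _).trans_eq ?_
  calc ∑ k ∈ Finset.Icc 1 n, ‖σ k ω‖ = ∑ _k ∈ Finset.Icc 1 n, (1 : ℝ) :=
        sum_congr rfl fun k hk => by rcases hω k hk with h' | h' <;> simp [h']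
    _ = n := by simp

lemma condExp_step (h : IsElephantRandomWalk μ p σ F S) [IsFiniteMeasure μ] {n : ℕ}
    (hn : 1 ≤ n) : μ[σ (n + 1) | F n] =ᵐ[μ] fun ω => (2 * p - 1) / n * S n ω := by
  set ind : ℝ → Ω → ℝ := fun s ω => if σ (n + 1) ω = s then 1 else 0 with hind
  have hint : ∀ s, Integrable (ind s) μ := fun s =>
    (integrable_const (1 : ℝ)).indicator
      (measurableSet_eq_fun (h.measurable_step (n + 1)) (measurable_const (a := s)))
      |>.congr (ae_of_all μ fun ω => by simp [hind, Set.indicator_apply])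
  have hdecomp : σ (n + 1) =ᵐ[μ] ind 1 - ind (-1) :=
    (h.step_eq_one_or_neg_one (n + 1) (by omega)).mono fun ω hω => by
      rcases hω with hω | hω <;> norm_num [hind, hω]
  filter_upwards [(condExp_congr_ae hdecomp).trans (condExp_sub (hint 1) (hint (-1)) (F n)),
    h.condExp_step_indicator n hn 1 (.inl rfl), h.condExp_step_indicator n hn (-1) (.inr rfl),
    h.ae_forall_step_eq_one_or_neg_one n] with ω hω hplus hminus hsteps
  rw [hω, Pi.sub_apply, hplus, hminus, h.walk_eq_sum, ← mul_sub, ← sum_sub_distrib, mul_sum,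
    mul_sum]
  refine sum_congr rfl fun k hk => ?_
  rcases hsteps k hk with h' | h' <;> norm_num [h'] <;> ring

lemma integral_walk_succ (h : IsElephantRandomWalk μ p σ F S) [IsProbabilityMeasure μ] {n : ℕ}
    (hn : 1 ≤ n) : ∫ ω, S (n + 1) ω ∂μ = (1 + (2 * p - 1) / n) * ∫ ω, S n ω ∂μ := by
  simp only [h.walk_succ]
  exact integral_add_of_condExp_eq_const_mul (h.filtration_le n)
    ((h.memLp_walk n).integrable le_top) ((h.memLp_step (by omega)).integrable le_top)
    (h.condExp_step hn)

lemma integral_sq_walk_succ (h : IsElephantRandomWalk μ p σ F S) [IsProbabilityMeasure μ] {n : ℕ}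
    (hn : 1 ≤ n) :
    ∫ ω, S (n + 1) ω ^ 2 ∂μ = (1 + (4 * p - 2) / n) * ∫ ω, S n ω ^ 2 ∂μ + 1 := by
  simp only [h.walk_succ]
  rw [integral_add_sq_of_condExp_eq_const_mul (h.filtration_le n) (h.stronglyMeasurable_walk n)
    ((h.memLp_walk n).mono_exponent le_top) (h.measurable_step _).aestronglyMeasurable
    (h.abs_step_eq_one (by omega)) (h.condExp_step hn)]
  ring

lemma walk_one (h : IsElephantRandomWalk μ p σ F S) (hfirst : ∀ᵐ ω ∂μ, σ 1 ω = 1) :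
    ∀ᵐ ω ∂μ, S 1 ω = 1 :=
  hfirst.mono fun ω hω => by simp [h.walk_eq_sum, hω]

lemma tendsto_integral_walk_div_rpow (h : IsElephantRandomWalk μ p σ F S)
    [IsProbabilityMeasure μ] (hfirst : ∀ᵐ ω ∂μ, σ 1 ω = 1) (hp : 1 / 2 < p) :
    Tendsto (fun n : ℕ => ∫ ω, S n ω / (n : ℝ) ^ (2 * p - 1) ∂μ) atTop
      (𝓝 (1 / Gamma (2 * p))) := by
  have hone : ∫ ω, S 1 ω ∂μ = 1 := by simp [integral_congr_ae (h.walk_one hfirst)]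
  have := tendsto_div_rpow_of_eq_one_add_div_mul (x := fun n => ∫ ω, S n ω ∂μ) (by linarith) hone
    fun n hn => h.integral_walk_succ hn
  rw [sub_add_cancel] at this
  simpa only [integral_div] using this

lemma tendsto_integral_sq_walk_div_rpow (h : IsElephantRandomWalk μ p σ F S)
    [IsProbabilityMeasure μ] (hfirst : ∀ᵐ ω ∂μ, σ 1 ω = 1) (hp : 3 / 4 < p) :
    Tendsto (fun n : ℕ => ∫ ω, (S n ω / (n : ℝ) ^ (2 * p - 1)) ^ 2 ∂μ) atTop
      (𝓝 (1 / ((4 * p - 3) * Gamma (4 * p - 2)))) := by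
  have hone : ∫ ω, S 1 ω ^ 2 ∂μ = 1 := by
    simp [integral_congr_ae ((h.walk_one hfirst).mono fun ω hω => congrArg (· ^ 2) hω)]
  have := tendsto_div_rpow_of_eq_one_add_div_mul_add_one (y := fun n => ∫ ω, S n ω ^ 2 ∂μ)
    (by linarith) hone fun n hn => h.integral_sq_walk_succ hn
  rw [show 4 * p - 2 - 1 = 4 * p - 3 by ring] at this
  have hsq : ∀ (n : ℕ) (x : ℝ), (x / (n : ℝ) ^ (2 * p - 1)) ^ 2 = x ^ 2 / (n : ℝ) ^ (4 * p - 2) :=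
    fun n x => by
    rw [div_pow, ← rpow_mul_natCast n.cast_nonneg]
    ring_nf
  simpa only [hsq, integral_div] using this

end IsElephantRandomWalk

theorem erw_limit_moments_general
    {Ω : Type*} {m0 : MeasurableSpace Ω} (μ : Measure Ω) [IsProbabilityMeasure μ]
    (p : ℝ)
    (σ : ℕ → Ω → ℝ) (hσmeas : ∀ k, Measurable (σ k))
    (hval : ∀ k ≥ 1, ∀ᵐ ω ∂μ, σ k ω = 1 ∨ σ k ω = -1)
    (F : ℕ → MeasurableSpace Ω)
    (hF : ∀ n, F n = ⨆ k ∈ Set.Icc 1 n, MeasurableSpace.comap (σ k) inferInstance)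
    (S : ℕ → Ω → ℝ) (hS : ∀ n ω, S n ω = ∑ k ∈ Finset.Icc 1 n, σ k ω)
    (hmodel : ∀ n ≥ 1, ∀ s : ℝ, (s = 1 ∨ s = -1) →
      μ[(fun ω => if σ (n+1) ω = s then (1:ℝ) else 0) | F n]
        =ᵐ[μ] fun ω => (n : ℝ)⁻¹ * ∑ k ∈ Finset.Icc 1 n,
          (p * (if σ k ω = s then (1:ℝ) else 0)
            + (1 - p) * (if σ k ω = -s then (1:ℝ) else 0)))
    (hp' : p ∈ Set.Ioo (3/4 : ℝ) 1)
    (hfirst : ∀ᵐ ω ∂μ, σ 1 ω = 1)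
    (Y : Ω → ℝ)
    (hYas : ∀ᵐ ω ∂μ, Tendsto (fun n : ℕ => S n ω / (n : ℝ) ^ (2 * p - 1)) atTop (nhds (Y ω)))
    (hYL2 : Tendsto (fun n : ℕ =>
      ∫ ω, (S n ω / (n : ℝ) ^ (2 * p - 1) - Y ω) ^ 2 ∂μ) atTop (nhds 0)) :
    ∫ ω, Y ω ∂μ = 1 / Real.Gamma (2 * p) ∧
    ∫ ω, (Y ω) ^ 2 ∂μ = 1 / ((4 * p - 3) * Real.Gamma (4 * p - 2)) := by
  have h : IsElephantRandomWalk μ p σ F S := ⟨hσmeas, hval, hF, hS, hmodel⟩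
  have hX : ∀ n : ℕ, MemLp (fun ω => S n ω / (n : ℝ) ^ (2 * p - 1)) 2 μ := fun n => by
    simpa only [div_eq_mul_inv] using ((h.memLp_walk n).mono_exponent le_top).mul_const _
  have hmean := h.tendsto_integral_walk_div_rpow hfirst (by linarith [hp'.1])
  have hsq := h.tendsto_integral_sq_walk_div_rpow hfirst hp'.1
  have hY : MemLp Y 2 μ := memLp_two_of_tendsto_ae_of_tendsto_integral_sq hX hYas hsq
  exact ⟨tendsto_nhds_unique (tendsto_integral_of_tendsto_integral_sub_sq hX hY hYL2) hmean,
    tendsto_nhds_unique (tendsto_integral_sq_of_tendsto_integral_sub_sq hX hY hYL2) hsq⟩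

/-- For `3/4 < p < 1` and deterministic first step `σ_1 = +1`, the a.s. (and `L^2`)
limit `Y` of `S_n / n^{2p-1}` satisfies `E[Y] = 1/Γ(2p)` and
`E[Y^2] = 1/((4p-3) Γ(4p-2))`. -/
theorem erw_limit_moments
    {Ω : Type*} {m0 : MeasurableSpace Ω} (μ : Measure Ω) [IsProbabilityMeasure μ]
    (p q : ℝ) (hp : p ∈ Set.Icc (0:ℝ) 1) (hq : q ∈ Set.Icc (0:ℝ) 1)
    (σ : ℕ → Ω → ℝ) (hσmeas : ∀ k, Measurable (σ k))
    (hval : ∀ k ≥ 1, ∀ᵐ ω ∂μ, σ k ω = 1 ∨ σ k ω = -1)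
    (hq1 : μ {ω | σ 1 ω = 1} = ENNReal.ofReal q)
    (F : ℕ → MeasurableSpace Ω)
    (hF : ∀ n, F n = ⨆ k ∈ Set.Icc 1 n, MeasurableSpace.comap (σ k) inferInstance)
    (S : ℕ → Ω → ℝ) (hS : ∀ n ω, S n ω = ∑ k ∈ Finset.Icc 1 n, σ k ω)
    (hmodel : ∀ n ≥ 1, ∀ s : ℝ, (s = 1 ∨ s = -1) →
      μ[(fun ω => if σ (n+1) ω = s then (1:ℝ) else 0) | F n]
        =ᵐ[μ] fun ω => (n : ℝ)⁻¹ * ∑ k ∈ Finset.Icc 1 n,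
          (p * (if σ k ω = s then (1:ℝ) else 0)
            + (1 - p) * (if σ k ω = -s then (1:ℝ) else 0)))
    (hp' : p ∈ Set.Ioo (3/4 : ℝ) 1)
    (hfirst : ∀ᵐ ω ∂μ, σ 1 ω = 1)
    (Y : Ω → ℝ) (hYmeas : Measurable Y)
    (hYas : ∀ᵐ ω ∂μ, Tendsto (fun n : ℕ => S n ω / (n : ℝ) ^ (2 * p - 1)) atTop (nhds (Y ω)))
    (hYL2 : Tendsto (fun n : ℕ =>
      ∫ ω, (S n ω / (n : ℝ) ^ (2 * p - 1) - Y ω) ^ 2 ∂μ) atTop (nhds 0)) :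
    ∫ ω, Y ω ∂μ = 1 / Real.Gamma (2 * p) ∧
    ∫ ω, (Y ω) ^ 2 ∂μ = 1 / ((4 * p - 3) * Real.Gamma (4 * p - 2)) :=
  erw_limit_moments_general (m0 := m0) μ p σ hσmeas hval F hF S hS hmodel hp' hfirst Y hYas hYL2
end

section
/- Consider the two-color urn process (X_n^1, X_n^2) with initial composition X_1 = ξ ∈ {(1,0),(0,1)} in which at each step a ball is drawn uniformly at random, returned, and a ball of the same color is added with probability p, of the opposite color with probability 1−p. Then the process (X_n^1 − X_n^2, n ≥ 1) has the same law as the elephant random walk (S_n, n ≥ 1) with memory parameter p and first step S_1 = ξ^1 − ξ^2. -/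
open MeasureTheory Filter

/-!
Both processes are driven by a sequence of binary steps: step `j` of the urn is "a black ball is
added at time `j + 2`", step `j` of the walk is "`σ (j + 2) = 1`". In both models, given the past,
the next step is up with probability `(p b + (1 - p) r) / (n + 1)`, where `(b, r)` is `ξ` plus the
numbers of up and down steps so far. Hence every finite prefix of the step sequence has the same
probability in both models, the two step sequences have the same law on `ℕ → Bool`, and each
observed process is the same measurable function `walk ξ` of its step sequence.
-/

section

variable {Ω : Type*} {m m0 : MeasurableSpace Ω} {μ : Measure Ω}

theorem measureReal_inter_eq_of_condExp_indicator [IsFiniteMeasure μ] (hm : m ≤ m0)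
    {A E : Set Ω} (hA : MeasurableSet[m] A) (hE : MeasurableSet E) {c : ℝ}
    (hc : ∀ᵐ ω ∂μ, ω ∈ A → μ[E.indicator 1 | m] ω = c) :
    μ.real (A ∩ E) = c * μ.real A := by
  calc μ.real (A ∩ E) = ∫ ω in A, E.indicator 1 ω ∂μ := by
        rw [integral_indicator_one hE, measureReal_restrict_apply hE, Set.inter_comm]
    _ = ∫ ω in A, μ[E.indicator 1 | m] ω ∂μ :=
        (setIntegral_condExp hm ((integrable_const 1).indicator hE) hA).symm
    _ = ∫ _ in A, c ∂μ := setIntegral_congr_ae (hm _ hA) hc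
    _ = c * μ.real A := by rw [setIntegral_const, smul_eq_mul, mul_comm]

theorem measureReal_prefix_eq_prod [IsProbabilityMeasure μ] (η : Ω → ℕ → Bool)
    (F : ℕ → MeasurableSpace Ω) (hF : ∀ n, F n ≤ m0)
    (hη : ∀ n j, j < n → Measurable[F n] fun ω => η ω j) (ε : ℕ → Bool) (q : ℕ → ℝ)
    (hq : ∀ n, ∀ᵐ ω ∂μ, (∀ j < n, η ω j = ε j) →
      μ[{ω | η ω n = true}.indicator 1 | F n] ω = q n) (n : ℕ) :
    μ.real {ω | ∀ j < n, η ω j = ε j} = ∏ j ∈ Finset.range n, if ε j then q j else 1 - q j := by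
  induction n with
  | zero => simp
  | succ n ih =>
    set A := {ω | ∀ j < n, η ω j = ε j}
    set E := {ω | η ω n = true}
    have hA : MeasurableSet[F n] A := by
      simp only [A, Set.ofPred_forall]
      exact .iInter fun j => .iInter fun hj => hη n j hj (measurableSet_singleton _)
    have hE : MeasurableSet E :=
      hF (n + 1) _ (hη (n + 1) n n.lt_succ_self (measurableSet_singleton _))
    have hAE := measureReal_inter_eq_of_condExp_indicator (hF n) hA hE (hq n)
    have hsucc : {ω | ∀ j < n + 1, η ω j = ε j} = A ∩ {ω | η ω n = ε n} := by
      ext ω; exact Nat.forall_lt_succ_right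
    rw [hsucc, Finset.prod_range_succ, ← ih]
    cases h : ε n
    · have : A ∩ {ω | η ω n = false} = A \ E := by ext ω; simp [E]
      rw [this, if_neg Bool.false_ne_true]
      linear_combination measureReal_inter_add_sdiff (μ := μ) (s := A) hE - hAE
    · rw [if_pos rfl, mul_comm]
      exact hAE

end

theorem measurableSet_prefix {α : Type*} [MeasurableSpace α] [MeasurableSingletonClass α]
    (n : ℕ) (a : ℕ → α) : MeasurableSet {f : ℕ → α | ∀ j < n, f j = a j} := by
  simp only [Set.ofPred_forall]
  exact .iInter fun j => .iInter fun _ => measurable_pi_apply j (measurableSet_singleton _)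

theorem MeasureTheory.Measure.ext_of_prefix {α : Type*} [MeasurableSpace α] [Countable α]
    [MeasurableSingletonClass α] {P Q : Measure (ℕ → α)} [IsFiniteMeasure P]
    (h : ∀ n (a : ℕ → α), P {f | ∀ j < n, f j = a j} = Q {f | ∀ j < n, f j = a j}) :
    P = Q := by
  have hrange : ∀ M, P.map (Finset.range M).restrict = Q.map (Finset.range M).restrict := by
    intro M
    refine Measure.ext_of_singleton fun a => ?_
    rw [Measure.map_apply (Finset.measurable_restrict _) (measurableSet_singleton a),
      Measure.map_apply (Finset.measurable_restrict _) (measurableSet_singleton a)]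
    set r : (ℕ → α) → (Finset.range M → α) := (Finset.range M).restrict
    rcases (r ⁻¹' {a}).eq_empty_or_nonempty with hempty | ⟨f₀, hf₀⟩
    · simp only [hempty, measure_empty]
    have : r ⁻¹' {a} = {f | ∀ j < M, f j = f₀ j} := by
      ext f
      simp only [Set.mem_preimage, Set.mem_singleton_iff] at hf₀ ⊢
      simp [r, ← hf₀, funext_iff, Finset.restrict]
    rw [this, h]
  have hQ : IsFiniteMeasure Q := by
    have huniv := congrArg (· Set.univ) (hrange 0)
    simp only [Measure.map_apply (Finset.measurable_restrict _) MeasurableSet.univ,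
      Set.preimage_univ] at huniv
    exact ⟨huniv ▸ measure_lt_top P Set.univ⟩
  refine IsProjectiveLimit.unique (P := fun I => P.map I.restrict) (fun I => rfl) fun I => ?_
  have hI : I ⊆ Finset.range (I.sup id + 1) := fun i hi =>
    Finset.mem_range.2 (Nat.lt_succ_of_le (Finset.le_sup (f := id) hi))
  simp only [← Finset.restrict₂_comp_restrict hI]
  rw [← Measure.map_map (Finset.measurable_restrict₂ hI) (Finset.measurable_restrict _),
    ← Measure.map_map (Finset.measurable_restrict₂ hI) (Finset.measurable_restrict _), hrange]

theorem measurable_iSup₂_comap {Ω ι β : Type*} [MeasurableSpace β] (f : ι → Ω → β) {s : Set ι}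
    {k : ι} (hk : k ∈ s) :
    Measurable[⨆ i ∈ s, MeasurableSpace.comap (f i) inferInstance] (f k) :=
  measurable_iff_comap_le.2 <|
    le_iSup₂ (f := fun i (_ : i ∈ s) => MeasurableSpace.comap (f i) inferInstance) k hk

-- The urn composition at time `n + 1`, after the steps `e 0, …, e (n - 1)`.
def composition (ξ : ℕ × ℕ) (e : ℕ → Bool) (n : ℕ) : ℕ × ℕ :=
  ξ + ∑ j ∈ Finset.range n, if e j then (1, 0) else (0, 1)

noncomputable def upProb (p : ℝ) (ξ : ℕ × ℕ) (e : ℕ → Bool) (n : ℕ) : ℝ :=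
  (p * (composition ξ e n).1 + (1 - p) * (composition ξ e n).2) / (n + 1)

def walk (ξ : ℕ × ℕ) (e : ℕ → Bool) (n : ℕ) : ℝ :=
  ((composition ξ e n).1 : ℝ) - (composition ξ e n).2

def upSteps (b : ℕ → ℕ) (j : ℕ) : Bool := b (j + 2) = b (j + 1) + 1

noncomputable def plusSteps (s : ℕ → ℝ) (j : ℕ) : Bool := s (j + 2) = 1

theorem measurable_upSteps {Ω : Type*} {m : MeasurableSpace Ω} {b : ℕ → Ω → ℕ} {j : ℕ}
    (h₁ : Measurable (b (j + 1))) (h₂ : Measurable (b (j + 2))) :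
    Measurable fun ω => upSteps (b · ω) j :=
  (measurable_of_countable fun x : ℕ × ℕ => decide (x.1 = x.2 + 1)).comp (h₂.prodMk h₁)

theorem measurable_plusSteps {Ω : Type*} {m : MeasurableSpace Ω} {s : ℕ → Ω → ℝ} {j : ℕ}
    (h : Measurable (s (j + 2))) : Measurable fun ω => plusSteps (s · ω) j :=
  (measurable_to_bool (f := fun x : ℝ => decide (x = 1)) (by simp [Set.preimage])).comp h

theorem composition_zero (ξ : ℕ × ℕ) (e : ℕ → Bool) : composition ξ e 0 = ξ := by
  simp [composition]

theorem composition_succ (ξ : ℕ × ℕ) (e : ℕ → Bool) (n : ℕ) :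
    composition ξ e (n + 1) = composition ξ e n + if e n then (1, 0) else (0, 1) := by
  simp only [composition, Finset.sum_range_succ, add_assoc]

theorem composition_congr (ξ : ℕ × ℕ) {e e' : ℕ → Bool} {n : ℕ} (h : ∀ j < n, e j = e' j) :
    composition ξ e n = composition ξ e' n := by
  unfold composition
  exact congrArg _ (Finset.sum_congr rfl fun j hj => by rw [h j (Finset.mem_range.1 hj)])

theorem composition_upSteps {b r : ℕ → ℕ} {ξ : ℕ × ℕ} (h₁ : b 1 = ξ.1 ∧ r 1 = ξ.2)
    (hstep : ∀ n, 1 ≤ n →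
      (b (n + 1) = b n + 1 ∧ r (n + 1) = r n) ∨ (b (n + 1) = b n ∧ r (n + 1) = r n + 1))
    (n : ℕ) : (b (n + 1), r (n + 1)) = composition ξ (upSteps b) n := by
  induction n with
  | zero => simp [composition_zero, h₁.1, h₁.2]
  | succ n ih =>
    rw [composition_succ, ← ih]
    rcases hstep (n + 1) n.succ_pos with ⟨hb, hr⟩ | ⟨hb, hr⟩ <;> simp [upSteps, hb, hr]

theorem composition_plusSteps {s : ℕ → ℝ} {ξ : ℕ × ℕ} (hξ : ξ = (1, 0) ∨ ξ = (0, 1))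
    (h₁ : s 1 = ξ.1 - ξ.2) (hval : ∀ k, 1 ≤ k → s k = 1 ∨ s k = -1) (n : ℕ) :
    (∑ k ∈ Finset.Icc 1 (n + 1), if s k = 1 then 1 else 0,
      ∑ k ∈ Finset.Icc 1 (n + 1), if s k = -1 then 1 else 0) = composition ξ (plusSteps s) n := by
  induction n with
  | zero => rcases hξ with rfl | rfl <;> norm_num [composition_zero, h₁, -Finset.sum_boole]
  | succ n ih =>
    rw [composition_succ, ← ih]
    simp only [Finset.sum_Icc_succ_top (show 1 ≤ n + 2 by omega)]
    rcases hval (n + 2) (by omega) with h | h <;> norm_num [plusSteps, h, -Finset.sum_boole]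

theorem measurable_composition (ξ : ℕ × ℕ) (n : ℕ) :
    Measurable fun e : ℕ → Bool => composition ξ e n :=
  measurable_const.add <| Finset.measurable_sum _ fun j _ =>
    (measurable_of_countable fun b : Bool => if b then (1, 0) else (0, 1)).comp
      (measurable_pi_apply j)

theorem measurable_walk (ξ : ℕ × ℕ) : Measurable (walk ξ) :=
  measurable_pi_lambda _ fun n =>
    (measurable_from_nat.comp (measurable_fst.comp (measurable_composition ξ n))).sub
      (measurable_from_nat.comp (measurable_snd.comp (measurable_composition ξ n)))

theorem sum_Icc_eq_walk {s : ℕ → ℝ} {ξ : ℕ × ℕ} (hξ : ξ = (1, 0) ∨ ξ = (0, 1))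
    (h₁ : s 1 = ξ.1 - ξ.2) (hval : ∀ k, 1 ≤ k → s k = 1 ∨ s k = -1) (n : ℕ) :
    ∑ k ∈ Finset.Icc 1 (n + 1), s k = walk ξ (plusSteps s) n := by
  rw [walk, ← composition_plusSteps hξ h₁ hval n]
  push_cast
  rw [← Finset.sum_sub_distrib]
  refine Finset.sum_congr rfl fun k hk => ?_
  rcases hval k (Finset.mem_Icc.1 hk).1 with h | h <;> norm_num [h]

section Urn

variable {Ω : Type*} {m0 : MeasurableSpace Ω} {μ : Measure Ω} {B R : ℕ → Ω → ℕ} {ξ : ℕ × ℕ}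

theorem ae_composition_upSteps (hinit : ∀ᵐ ω ∂μ, B 1 ω = ξ.1 ∧ R 1 ω = ξ.2)
    (hstep : ∀ n : ℕ, 1 ≤ n → ∀ᵐ ω ∂μ,
      (B (n + 1) ω = B n ω + 1 ∧ R (n + 1) ω = R n ω) ∨
      (B (n + 1) ω = B n ω ∧ R (n + 1) ω = R n ω + 1)) :
    ∀ᵐ ω ∂μ, ∀ n, (B (n + 1) ω, R (n + 1) ω) = composition ξ (upSteps (B · ω)) n := by
  filter_upwards [hinit, ae_all_iff.2 fun n => eventually_imp_distrib_left.2 (hstep n)]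
    with ω h₁ hs
  exact composition_upSteps (b := (B · ω)) (r := (R · ω)) h₁ hs

theorem ae_urn_eq_walk (hinit : ∀ᵐ ω ∂μ, B 1 ω = ξ.1 ∧ R 1 ω = ξ.2)
    (hstep : ∀ n : ℕ, 1 ≤ n → ∀ᵐ ω ∂μ,
      (B (n + 1) ω = B n ω + 1 ∧ R (n + 1) ω = R n ω) ∨
      (B (n + 1) ω = B n ω ∧ R (n + 1) ω = R n ω + 1)) :
    (fun ω n => (B (n + 1) ω : ℝ) - (R (n + 1) ω : ℝ)) =ᵐ[μ]
      fun ω => walk ξ (upSteps (B · ω)) := by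
  filter_upwards [ae_composition_upSteps hinit hstep] with ω h
  funext n
  simp [walk, ← h n]

theorem urn_measureReal_prefix [IsProbabilityMeasure μ] (p : ℝ)
    (hBmeas : ∀ n, Measurable (B n)) (hRmeas : ∀ n, Measurable (R n))
    (hinit : ∀ᵐ ω ∂μ, B 1 ω = ξ.1 ∧ R 1 ω = ξ.2)
    (hstep : ∀ n : ℕ, 1 ≤ n → ∀ᵐ ω ∂μ,
      (B (n + 1) ω = B n ω + 1 ∧ R (n + 1) ω = R n ω) ∨
      (B (n + 1) ω = B n ω ∧ R (n + 1) ω = R n ω + 1))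
    (hurn : ∀ n : ℕ, 1 ≤ n →
      μ[(fun ω => if B (n + 1) ω = B n ω + 1 then (1 : ℝ) else 0) |
          ⨆ k ∈ Set.Icc 1 n, MeasurableSpace.comap (fun ω => (B k ω, R k ω)) inferInstance]
        =ᵐ[μ] fun ω => (p * (B n ω : ℝ) + (1 - p) * (R n ω : ℝ)) / n)
    (ε : ℕ → Bool) (n : ℕ) :
    μ.real {ω | ∀ j < n, upSteps (B · ω) j = ε j} =
      ∏ j ∈ Finset.range n, if ε j then upProb p ξ ε j else 1 - upProb p ξ ε j := by
  let F (n : ℕ) : MeasurableSpace Ω :=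
    ⨆ k ∈ Set.Icc 1 (n + 1), MeasurableSpace.comap (fun ω => (B k ω, R k ω)) inferInstance
  have hBR (n k : ℕ) (hk : k ∈ Set.Icc 1 (n + 1)) :
      Measurable[F n] fun ω => (B k ω, R k ω) :=
    measurable_iSup₂_comap (fun k ω => (B k ω, R k ω)) hk
  refine measureReal_prefix_eq_prod _ F
    (fun n => iSup₂_le fun k _ => ((hBmeas k).prodMk (hRmeas k)).comap_le)
    (fun n j hj => ?_) ε _ (fun n => ?_) n
  · exact measurable_upSteps (measurable_fst.comp (hBR n (j + 1) ⟨by omega, by omega⟩))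
      (measurable_fst.comp (hBR n (j + 2) ⟨by omega, by omega⟩))
  · filter_upwards [ae_composition_upSteps hinit hstep, hurn (n + 1) n.succ_pos]
      with ω hcomp hcond hprefix
    have hind : {ω | upSteps (B · ω) n = true}.indicator 1 =
        fun ω => if B (n + 1 + 1) ω = B (n + 1) ω + 1 then (1 : ℝ) else 0 := by
      ext ω; simp [upSteps, Set.indicator_apply]
    have hBRn := Prod.ext_iff.1 ((hcomp n).trans (composition_congr ξ hprefix))
    rw [hind]
    refine hcond.trans ?_
    simp only [upProb, ← hBRn.1, ← hBRn.2]
    push_cast; ring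

end Urn

section ElephantRandomWalk

variable {Ω : Type*} {m0 : MeasurableSpace Ω} {ν : Measure Ω} {σ : ℕ → Ω → ℝ} {ξ : ℕ × ℕ}

theorem ae_first_step_and_signs (hfirst : ∀ᵐ ω ∂ν, σ 1 ω = (ξ.1 : ℝ) - (ξ.2 : ℝ))
    (hval : ∀ k : ℕ, 1 ≤ k → ∀ᵐ ω ∂ν, σ k ω = 1 ∨ σ k ω = -1) :
    ∀ᵐ ω ∂ν, σ 1 ω = (ξ.1 : ℝ) - (ξ.2 : ℝ) ∧ ∀ k, 1 ≤ k → σ k ω = 1 ∨ σ k ω = -1 :=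
  hfirst.and (ae_all_iff.2 fun k => eventually_imp_distrib_left.2 (hval k))

theorem ae_sum_eq_walk (hξ : ξ = (1, 0) ∨ ξ = (0, 1))
    (hfirst : ∀ᵐ ω ∂ν, σ 1 ω = (ξ.1 : ℝ) - (ξ.2 : ℝ))
    (hval : ∀ k : ℕ, 1 ≤ k → ∀ᵐ ω ∂ν, σ k ω = 1 ∨ σ k ω = -1) :
    (fun ω n => ∑ k ∈ Finset.Icc 1 (n + 1), σ k ω) =ᵐ[ν] fun ω => walk ξ (plusSteps (σ · ω)) := by
  filter_upwards [ae_first_step_and_signs hfirst hval] with ω ⟨h₁, hs⟩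
  funext n
  exact sum_Icc_eq_walk hξ h₁ hs n

theorem erw_measureReal_prefix [IsProbabilityMeasure ν] (p : ℝ) (hξ : ξ = (1, 0) ∨ ξ = (0, 1))
    (hσmeas : ∀ k, Measurable (σ k))
    (hval : ∀ k : ℕ, 1 ≤ k → ∀ᵐ ω ∂ν, σ k ω = 1 ∨ σ k ω = -1)
    (hfirst : ∀ᵐ ω ∂ν, σ 1 ω = (ξ.1 : ℝ) - (ξ.2 : ℝ))
    (hmodel : ∀ n : ℕ, 1 ≤ n →
      ν[(fun ω => if σ (n + 1) ω = 1 then (1 : ℝ) else 0) |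
          ⨆ k ∈ Set.Icc 1 n, MeasurableSpace.comap (σ k) inferInstance]
        =ᵐ[ν] fun ω => (n : ℝ)⁻¹ * ∑ k ∈ Finset.Icc 1 n,
          (p * (if σ k ω = 1 then (1 : ℝ) else 0)
            + (1 - p) * (if σ k ω = -1 then (1 : ℝ) else 0)))
    (ε : ℕ → Bool) (n : ℕ) :
    ν.real {ω | ∀ j < n, plusSteps (σ · ω) j = ε j} =
      ∏ j ∈ Finset.range n, if ε j then upProb p ξ ε j else 1 - upProb p ξ ε j := by
  let F (n : ℕ) : MeasurableSpace Ω :=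
    ⨆ k ∈ Set.Icc 1 (n + 1), MeasurableSpace.comap (σ k) inferInstance
  refine measureReal_prefix_eq_prod _ F
    (fun n => iSup₂_le fun k _ => (hσmeas k).comap_le) (fun n j hj => ?_) ε _ (fun n => ?_) n
  · exact measurable_plusSteps (measurable_iSup₂_comap σ ⟨by omega, by omega⟩)
  · filter_upwards [ae_first_step_and_signs hfirst hval, hmodel (n + 1) n.succ_pos]
      with ω ⟨h₁, hsigns⟩ hcond hprefix
    have hind : {ω | plusSteps (σ · ω) n = true}.indicator 1 =
        fun ω => if σ (n + 1 + 1) ω = 1 then (1 : ℝ) else 0 := by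
      ext ω; simp [plusSteps, Set.indicator_apply]
    have hcounts := Prod.ext_iff.1
      ((composition_plusSteps hξ h₁ hsigns n).trans (composition_congr ξ hprefix))
    rw [hind]
    refine hcond.trans ?_
    simp only [upProb, ← hcounts.1, ← hcounts.2, Finset.sum_add_distrib, ← Finset.mul_sum]
    push_cast; ring

end ElephantRandomWalk

theorem erw_urn_equality_in_law_general
    {Ω : Type*} {m0 : MeasurableSpace Ω} (μ : Measure Ω) [IsProbabilityMeasure μ]
    {Ω' : Type*} {m0' : MeasurableSpace Ω'} (ν : Measure Ω') [IsProbabilityMeasure ν]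
    (p : ℝ)
    (ξ : ℕ × ℕ) (hξ : ξ = (1, 0) ∨ ξ = (0, 1))
    -- the urn process: `B n` black balls, `R n` red balls at time `n`
    (B R : ℕ → Ω → ℕ)
    (hBmeas : ∀ n, Measurable (B n)) (hRmeas : ∀ n, Measurable (R n))
    (hinit : ∀ᵐ ω ∂μ, B 1 ω = ξ.1 ∧ R 1 ω = ξ.2)
    (hstep : ∀ n : ℕ, 1 ≤ n → ∀ᵐ ω ∂μ,
      (B (n+1) ω = B n ω + 1 ∧ R (n+1) ω = R n ω) ∨
      (B (n+1) ω = B n ω ∧ R (n+1) ω = R n ω + 1))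
    (hurn : ∀ n : ℕ, 1 ≤ n →
      μ[(fun ω => if B (n+1) ω = B n ω + 1 then (1:ℝ) else 0) |
          ⨆ k ∈ Set.Icc 1 n, MeasurableSpace.comap (fun ω => (B k ω, R k ω)) inferInstance]
        =ᵐ[μ] fun ω => (p * (B n ω : ℝ) + (1 - p) * (R n ω : ℝ)) / n)
    -- the elephant random walk on `Ω'`
    (σ : ℕ → Ω' → ℝ) (hσmeas : ∀ k, Measurable (σ k))
    (hval : ∀ k : ℕ, 1 ≤ k → ∀ᵐ ω' ∂ν, σ k ω' = 1 ∨ σ k ω' = -1)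
    (hfirst : ∀ᵐ ω' ∂ν, σ 1 ω' = (ξ.1 : ℝ) - (ξ.2 : ℝ))
    (S : ℕ → Ω' → ℝ) (hS : ∀ n ω', S n ω' = ∑ k ∈ Finset.Icc 1 n, σ k ω')
    (hmodel : ∀ n : ℕ, 1 ≤ n → ∀ s : ℝ, (s = 1 ∨ s = -1) →
      ν[(fun ω' => if σ (n+1) ω' = s then (1:ℝ) else 0) |
          ⨆ k ∈ Set.Icc 1 n, MeasurableSpace.comap (σ k) inferInstance]
        =ᵐ[ν] fun ω' => (n : ℝ)⁻¹ * ∑ k ∈ Finset.Icc 1 n,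
          (p * (if σ k ω' = s then (1:ℝ) else 0)
            + (1 - p) * (if σ k ω' = -s then (1:ℝ) else 0))) :
    Measure.map (fun ω => fun n : ℕ => (B (n+1) ω : ℝ) - (R (n+1) ω : ℝ)) μ
      = Measure.map (fun ω' => fun n : ℕ => S (n+1) ω') ν := by
  have hη : Measurable fun ω => upSteps (B · ω) :=
    measurable_pi_lambda _ fun j => measurable_upSteps (hBmeas _) (hBmeas _)
  have hη' : Measurable fun ω' => plusSteps (σ · ω') :=
    measurable_pi_lambda _ fun j => measurable_plusSteps (hσmeas _)
  have hsigns : μ.map (fun ω => upSteps (B · ω)) = ν.map (fun ω' => plusSteps (σ · ω')) := by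
    refine Measure.ext_of_prefix fun n ε => ?_
    rw [Measure.map_apply hη (measurableSet_prefix n ε),
      Measure.map_apply hη' (measurableSet_prefix n ε)]
    refine (ENNReal.toReal_eq_toReal_iff' (measure_ne_top _ _) (measure_ne_top _ _)).1 ?_
    exact (urn_measureReal_prefix p hBmeas hRmeas hinit hstep hurn ε n).trans
      (erw_measureReal_prefix p hξ hσmeas hval hfirst (fun n hn => hmodel n hn 1 (.inl rfl))
        ε n).symm
  simp only [hS]
  calc μ.map (fun ω n => (B (n + 1) ω : ℝ) - (R (n + 1) ω : ℝ))
      = (μ.map fun ω => upSteps (B · ω)).map (walk ξ) := by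
        rw [Measure.map_congr (ae_urn_eq_walk hinit hstep),
          Measure.map_map (measurable_walk ξ) hη]; rfl
    _ = (ν.map fun ω' => plusSteps (σ · ω')).map (walk ξ) := by rw [hsigns]
    _ = ν.map (fun ω' n => ∑ k ∈ Finset.Icc 1 (n + 1), σ k ω') := by
        rw [Measure.map_congr (ae_sum_eq_walk hξ hfirst hval),
          Measure.map_map (measurable_walk ξ) hη']; rfl

/-- The difference of the two colour counts in the Pólya-type urn with memory
parameter `p` and initial composition `ξ ∈ {(1,0),(0,1)}` has the same law
(as a process indexed by `n ≥ 1`) as the elephant random walk with memory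
parameter `p` and first step `S_1 = ξ¹ - ξ²`. -/
theorem erw_urn_equality_in_law
    {Ω : Type*} {m0 : MeasurableSpace Ω} (μ : Measure Ω) [IsProbabilityMeasure μ]
    {Ω' : Type*} {m0' : MeasurableSpace Ω'} (ν : Measure Ω') [IsProbabilityMeasure ν]
    (p : ℝ) (hp : p ∈ Set.Icc (0:ℝ) 1)
    (ξ : ℕ × ℕ) (hξ : ξ = (1, 0) ∨ ξ = (0, 1))
    -- the urn process: `B n` black balls, `R n` red balls at time `n`
    (B R : ℕ → Ω → ℕ)
    (hBmeas : ∀ n, Measurable (B n)) (hRmeas : ∀ n, Measurable (R n))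
    (hinit : ∀ᵐ ω ∂μ, B 1 ω = ξ.1 ∧ R 1 ω = ξ.2)
    (hstep : ∀ n : ℕ, 1 ≤ n → ∀ᵐ ω ∂μ,
      (B (n+1) ω = B n ω + 1 ∧ R (n+1) ω = R n ω) ∨
      (B (n+1) ω = B n ω ∧ R (n+1) ω = R n ω + 1))
    (hurn : ∀ n : ℕ, 1 ≤ n →
      μ[(fun ω => if B (n+1) ω = B n ω + 1 then (1:ℝ) else 0) |
          ⨆ k ∈ Set.Icc 1 n, MeasurableSpace.comap (fun ω => (B k ω, R k ω)) inferInstance]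
        =ᵐ[μ] fun ω => (p * (B n ω : ℝ) + (1 - p) * (R n ω : ℝ)) / n)
    -- the elephant random walk on `Ω'`
    (σ : ℕ → Ω' → ℝ) (hσmeas : ∀ k, Measurable (σ k))
    (hval : ∀ k : ℕ, 1 ≤ k → ∀ᵐ ω' ∂ν, σ k ω' = 1 ∨ σ k ω' = -1)
    (hfirst : ∀ᵐ ω' ∂ν, σ 1 ω' = (ξ.1 : ℝ) - (ξ.2 : ℝ))
    (S : ℕ → Ω' → ℝ) (hS : ∀ n ω', S n ω' = ∑ k ∈ Finset.Icc 1 n, σ k ω')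
    (hmodel : ∀ n : ℕ, 1 ≤ n → ∀ s : ℝ, (s = 1 ∨ s = -1) →
      ν[(fun ω' => if σ (n+1) ω' = s then (1:ℝ) else 0) |
          ⨆ k ∈ Set.Icc 1 n, MeasurableSpace.comap (σ k) inferInstance]
        =ᵐ[ν] fun ω' => (n : ℝ)⁻¹ * ∑ k ∈ Finset.Icc 1 n,
          (p * (if σ k ω' = s then (1:ℝ) else 0)
            + (1 - p) * (if σ k ω' = -s then (1:ℝ) else 0))) :
    Measure.map (fun ω => fun n : ℕ => (B (n+1) ω : ℝ) - (R (n+1) ω : ℝ)) μ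
      = Measure.map (fun ω' => fun n : ℕ => S (n+1) ω') ν :=
  erw_urn_equality_in_law_general (m0 := m0) μ (m0' := m0') ν p ξ hξ B R hBmeas hRmeas hinit hstep
    hurn σ hσmeas hval hfirst S hS hmodel
end
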